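/- arXiv:1901.02368 — 9 statements merged into one kernel-verified Lean document; each statement's English description precedes it below -/
import Mathlib

section
/- With the setup of the multi-parameter Stäckel transform, define h̃_i(ξ,α̃) = h_i(ξ, h̃_{s_1}(ξ,α̃),…,h̃_{s_k}(ξ,α̃)) for i ∉ {s_1,…,s_k}. Then on the level set M_{α,α̃} = {ξ : h_{s_i}(ξ,α) = α̃_i, i=1,…,k}, the differentials satisfy dh_{s_i} = −Σ_{j=1}^k (∂h_{s_i}/∂α_j) dh̃_{s_j} for i = 1,…,k, and dh_i = dh̃_i − Σ_{j=1}^k (∂h_i/∂α_j) dh̃_{s_j} for i ∉ {s_1,…,s_k}. -/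
/-- on the level set `M_{α,α̃} = {ξ : h (s i) ξ α = α̃ i}` (where
moreover `α j = htil (s j) ξ α̃`, the solved parameters), the differentials of
the original and Stäckel-transformed Hamiltonians are related by
`dh_{s_i} = -∑_j (∂h_{s_i}/∂α_j) dh̃_{s_j}` and, for `i ∉ S`,
`dh_i = dh̃_i - ∑_j (∂h_i/∂α_j) dh̃_{s_j}`. -/
theorem stackel_transform_differentials
    (n k : ℕ) (hkn : k ≤ n)
    (s : Fin k → Fin n) (hs : Function.Injective s)
    (h htil : Fin n → EuclideanSpace ℝ (Fin (2 * n)) → (Fin k → ℝ) → ℝ)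
    (hsmooth : ∀ i, ContDiff ℝ (⊤ : ℕ∞)
      (fun p : EuclideanSpace ℝ (Fin (2 * n)) × (Fin k → ℝ) => h i p.1 p.2))
    (htsmooth : ∀ i, ContDiff ℝ (⊤ : ℕ∞)
      (fun p : EuclideanSpace ℝ (Fin (2 * n)) × (Fin k → ℝ) => htil i p.1 p.2))
    -- defining identity (id1) of the Stäckel transform
    (hid1 : ∀ ξ (αt : Fin k → ℝ) (i : Fin k),
      h (s i) ξ (fun j => htil (s j) ξ αt) = αt i)
    -- definition (id2) of the remaining transformed Hamiltonians
    (hid2 : ∀ ξ (αt : Fin k → ℝ) (i : Fin n), i ∉ Set.range s →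
      htil i ξ αt = h i ξ (fun j => htil (s j) ξ αt))
    (ξ : EuclideanSpace ℝ (Fin (2 * n))) (α : Fin k → ℝ) (αt : Fin k → ℝ)
    -- `ξ` lies on the level set `M_{α,α̃}`
    (hlevel : ∀ i : Fin k, h (s i) ξ α = αt i)
    -- the parameters `α` are the solved ones at `ξ`
    (hsolved : ∀ j : Fin k, α j = htil (s j) ξ αt) :
    (∀ i : Fin k,
      fderiv ℝ (fun x => h (s i) x α) ξ
        = -∑ j : Fin k, (fderiv ℝ (fun a => h (s i) ξ a) α (Pi.single j 1)) •
            fderiv ℝ (fun x => htil (s j) x αt) ξ) ∧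
    (∀ i : Fin n, i ∉ Set.range s →
      fderiv ℝ (fun x => h i x α) ξ
        = fderiv ℝ (fun x => htil i x αt) ξ
          - ∑ j : Fin k, (fderiv ℝ (fun a => h i ξ a) α (Pi.single j 1)) •
              fderiv ℝ (fun x => htil (s j) x αt) ξ) := by
  have hgξ : (fun j => htil (s j) ξ αt) = α := by
    funext j; exact (hsolved j).symm
  have htd : ∀ i : Fin n, HasFDerivAt (fun x => htil i x αt)
      (fderiv ℝ (fun x => htil i x αt) ξ) ξ := by
    intro i
    have hd : DifferentiableAt ℝ (fun x => htil i x αt) ξ := by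
      have h1 := ((htsmooth i).differentiable (by simp)).differentiableAt
        (x := (ξ, αt))
      exact DifferentiableAt.comp (f := fun x => (x, αt)) ξ h1 (differentiableAt_id.prodMk (differentiableAt_const αt))
    exact hd.hasFDerivAt
  have hgd : HasFDerivAt (fun x j => htil (s j) x αt)
      (ContinuousLinearMap.pi (fun j => fderiv ℝ (fun x => htil (s j) x αt) ξ)) ξ :=
    hasFDerivAt_pi.2 fun j => htd (s j)
  -- key: derivative of the composite x ↦ h i x (fun j => htil (s j) x αt)
  have key : ∀ i : Fin n,
      HasFDerivAt (fun x => h i x (fun j => htil (s j) x αt))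
        (fderiv ℝ (fun x => h i x α) ξ
          + ∑ j : Fin k, (fderiv ℝ (fun a => h i ξ a) α (Pi.single j 1)) •
              fderiv ℝ (fun x => htil (s j) x αt) ξ) ξ := by
    intro i
    obtain ⟨Dh, hDhd⟩ : ∃ D, HasFDerivAt
        (fun p : EuclideanSpace ℝ (Fin (2 * n)) × (Fin k → ℝ) => h i p.1 p.2)
        D (ξ, α) :=
      ⟨_, (((hsmooth i).differentiable (by simp)) (ξ, α)).hasFDerivAt⟩
    have hpart1 : HasFDerivAt (fun x => h i x α)
        (Dh.comp (ContinuousLinearMap.inl ℝ _ (Fin k → ℝ))) ξ :=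
      HasFDerivAt.comp (f := fun e => (e, α)) ξ hDhd (hasFDerivAt_prodMk_left ξ α)
    have hpart2 : HasFDerivAt (fun a => h i ξ a)
        (Dh.comp (ContinuousLinearMap.inr ℝ (EuclideanSpace ℝ (Fin (2 * n))) _)) α :=
      HasFDerivAt.comp (f := fun a => (ξ, a)) α hDhd (hasFDerivAt_prodMk_right ξ α)
    have e1 : fderiv ℝ (fun x => h i x α) ξ
        = Dh.comp (ContinuousLinearMap.inl ℝ _ (Fin k → ℝ)) := hpart1.fderiv
    have e2 : fderiv ℝ (fun a => h i ξ a) α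
        = Dh.comp (ContinuousLinearMap.inr ℝ (EuclideanSpace ℝ (Fin (2 * n))) _) :=
      hpart2.fderiv
    have hcomp : HasFDerivAt (fun x => h i x (fun j => htil (s j) x αt))
        (Dh.comp ((ContinuousLinearMap.id ℝ _).prod
          (ContinuousLinearMap.pi (fun j => fderiv ℝ (fun x => htil (s j) x αt) ξ)))) ξ := by
      have hpair : HasFDerivAt (fun x => (x, fun j => htil (s j) x αt))
          ((ContinuousLinearMap.id ℝ _).prod
            (ContinuousLinearMap.pi (fun j => fderiv ℝ (fun x => htil (s j) x αt) ξ))) ξ :=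
        (hasFDerivAt_id ξ).prodMk hgd
      rw [← hgξ] at hDhd
      exact hDhd.comp ξ hpair
    refine hcomp.congr_fderiv (Eq.symm ?_)
    apply ContinuousLinearMap.ext; intro v
    have hsplit : ((v, (ContinuousLinearMap.pi
          (fun j => fderiv ℝ (fun x => htil (s j) x αt) ξ)) v) :
          EuclideanSpace ℝ (Fin (2 * n)) × (Fin k → ℝ))
        = ((v, (0 : Fin k → ℝ)) + ((0 : EuclideanSpace ℝ (Fin (2 * n))),
            fun j => fderiv ℝ (fun x => htil (s j) x αt) ξ v)) := by
      simp [Prod.ext_iff]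
    have hDgv : (fun j => fderiv ℝ (fun x => htil (s j) x αt) ξ v) = (∑ j : Fin k,
        (fderiv ℝ (fun x => htil (s j) x αt) ξ v) • (Pi.single j (1 : ℝ) : Fin k → ℝ) :
          Fin k → ℝ) := by
      funext m
      simp [Finset.sum_apply, Pi.single_apply, mul_comm]
    have hlin : Dh ((0 : EuclideanSpace ℝ (Fin (2 * n))),
          fun j => fderiv ℝ (fun x => htil (s j) x αt) ξ v) = ∑ j : Fin k,
        (fderiv ℝ (fun x => htil (s j) x αt) ξ v) *
          Dh ((0 : EuclideanSpace ℝ (Fin (2 * n))), Pi.single j 1) := by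
      rw [hDgv]
      have hps : (((0 : EuclideanSpace ℝ (Fin (2 * n))), (∑ j : Fin k,
          (fderiv ℝ (fun x => htil (s j) x αt) ξ v) • (Pi.single j (1 : ℝ) : Fin k → ℝ) :
            Fin k → ℝ)) :
            EuclideanSpace ℝ (Fin (2 * n)) × (Fin k → ℝ))
          = ∑ j : Fin k, (fderiv ℝ (fun x => htil (s j) x αt) ξ v) •
              (((0 : EuclideanSpace ℝ (Fin (2 * n))), Pi.single j (1 : ℝ)) :
                EuclideanSpace ℝ (Fin (2 * n)) × (Fin k → ℝ)) := by
        simp [Prod.ext_iff, Prod.fst_sum, Prod.snd_sum]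
      rw [hps, map_sum]
      simp only [map_smul, smul_eq_mul]
    simp only [ContinuousLinearMap.add_apply, ContinuousLinearMap.coe_comp',
      Function.comp_apply, ContinuousLinearMap.prod_apply,
      ContinuousLinearMap.coe_id', id_eq, ContinuousLinearMap.coe_sum',
      Finset.sum_apply, ContinuousLinearMap.coe_smul', Pi.smul_apply,
      smul_eq_mul, e1, e2, ContinuousLinearMap.inl_apply,
      ContinuousLinearMap.inr_apply]
    rw [hsplit, map_add, hlin]
    congr 1
    exact Finset.sum_congr rfl fun j _ => mul_comm _ _
  constructor
  · intro i
    have hconst : HasFDerivAt (fun x => h (s i) x (fun j => htil (s j) x αt)) (0 : EuclideanSpace ℝ (Fin (2 * n)) →L[ℝ] ℝ) ξ := by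
      have hc : (fun x => h (s i) x (fun j => htil (s j) x αt)) = fun _ => αt i := by
        funext x; exact hid1 x αt i
      rw [hc]; exact hasFDerivAt_const (αt i) ξ
    exact eq_neg_of_add_eq_zero_left ((key (s i)).unique hconst)
  · intro i hi
    have heq : (fun x => h i x (fun j => htil (s j) x αt)) = fun x => htil i x αt := by
      funext x; exact (hid2 x αt i hi).symm
    have hder : HasFDerivAt (fun x => h i x (fun j => htil (s j) x αt))
        (fderiv ℝ (fun x => htil i x αt) ξ) ξ := by
      rw [heq]; exact htd i
    exact eq_sub_of_add_eq ((key i).unique hder)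
end

section
/- Suppose the Hamiltonians h_1,…,h_n pairwise Poisson-commute, {h_i, h_j} = 0, for all values of the parameters α_1,…,α_k. Then their multi-parameter Stäckel transforms h̃_1,…,h̃_n pairwise Poisson-commute, {h̃_i, h̃_j} = 0, for all values of the parameters α̃_1,…,α̃_k. -/
open scoped BigOperators

/-- The canonical Poisson bracket on `ℝ^{2n} = (Fin n → ℝ) × (Fin n → ℝ)`:
`{F,G} = ∑ i (∂F/∂q_i ∂G/∂p_i − ∂F/∂p_i ∂G/∂q_i)`. -/
noncomputable def poissonBracket {n : ℕ}
    (F G : (Fin n → ℝ) × (Fin n → ℝ) → ℝ)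
    (ξ : (Fin n → ℝ) × (Fin n → ℝ)) : ℝ :=
  ∑ i : Fin n,
    (fderiv ℝ F ξ (Pi.single i 1, 0) * fderiv ℝ G ξ (0, Pi.single i 1)
      - fderiv ℝ F ξ (0, Pi.single i 1) * fderiv ℝ G ξ (Pi.single i 1, 0))

namespace StackelAux

abbrev Sp (n : ℕ) : Type := (Fin n → ℝ) × (Fin n → ℝ)

noncomputable def pbForm (n : ℕ) : (Sp n →L[ℝ] ℝ) →ₗ[ℝ] (Sp n →L[ℝ] ℝ) →ₗ[ℝ] ℝ :=
  LinearMap.mk₂ ℝ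
    (fun L M => ∑ i : Fin n, (L (Pi.single i 1, 0) * M (0, Pi.single i 1)
      - L (0, Pi.single i 1) * M (Pi.single i 1, 0)))
    (fun L L' M => by
      rw [← Finset.sum_add_distrib]
      exact Finset.sum_congr rfl fun i _ => by
        simp only [ContinuousLinearMap.add_apply]; ring)
    (fun c L M => by
      rw [Finset.smul_sum]
      exact Finset.sum_congr rfl fun i _ => by
        simp only [ContinuousLinearMap.coe_smul', Pi.smul_apply, smul_eq_mul]; ring)
    (fun L M M' => by
      rw [← Finset.sum_add_distrib]
      exact Finset.sum_congr rfl fun i _ => by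
        simp only [ContinuousLinearMap.add_apply]; ring)
    (fun c L M => by
      rw [Finset.smul_sum]
      exact Finset.sum_congr rfl fun i _ => by
        simp only [ContinuousLinearMap.coe_smul', Pi.smul_apply, smul_eq_mul]; ring)

lemma pb_eq {n : ℕ} (F G : Sp n → ℝ) (ξ : Sp n) :
    poissonBracket F G ξ = pbForm n (fderiv ℝ F ξ) (fderiv ℝ G ξ) := rfl

lemma pbForm_antisymm {n : ℕ} (L M : Sp n →L[ℝ] ℝ) :
    pbForm n L M = - pbForm n M L := by
  show (∑ i : Fin n, _) = -(∑ i : Fin n, _)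
  rw [← Finset.sum_neg_distrib]
  exact Finset.sum_congr rfl fun i _ => by ring

lemma pb_expand_right {n k : ℕ} (L Y : Sp n →L[ℝ] ℝ) (U : Fin k → (Sp n →L[ℝ] ℝ))
    (E : Fin k → ℝ) :
    pbForm n L (Y + ∑ l, E l • U l)
      = pbForm n L Y + ∑ l, E l * pbForm n L (U l) := by
  simp [map_add, map_sum, map_smul, smul_eq_mul]

lemma pb_expand_left {n k : ℕ} (X M : Sp n →L[ℝ] ℝ) (U : Fin k → (Sp n →L[ℝ] ℝ))
    (D : Fin k → ℝ) :
    pbForm n (X + ∑ m, D m • U m) M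
      = pbForm n X M + ∑ m, D m * pbForm n (U m) M := by
  simp [map_add, map_sum, map_smul, LinearMap.add_apply, LinearMap.sum_apply,
    LinearMap.smul_apply, smul_eq_mul]

lemma pb_expand {n k : ℕ} (X Y : Sp n →L[ℝ] ℝ) (U : Fin k → (Sp n →L[ℝ] ℝ))
    (D E : Fin k → ℝ) :
    pbForm n (X + ∑ m, D m • U m) (Y + ∑ l, E l • U l)
      = pbForm n X Y + ∑ l, E l * pbForm n X (U l)
        + ∑ m, D m * pbForm n (U m) Y
        + ∑ m, ∑ l, D m * E l * pbForm n (U m) (U l) := by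
  rw [pb_expand_left, pb_expand_right]
  have h1 : ∀ m, D m * pbForm n (U m) (Y + ∑ l, E l • U l)
      = D m * pbForm n (U m) Y + ∑ l, D m * E l * pbForm n (U m) (U l) := by
    intro m
    rw [pb_expand_right, mul_add, Finset.mul_sum]
    congr 1
    exact Finset.sum_congr rfl fun l _ => by ring
  rw [Finset.sum_congr rfl fun m _ => h1 m, Finset.sum_add_distrib]
  ring

lemma clm_pi_decomp {k : ℕ} {X : Type*} [NormedAddCommGroup X] [NormedSpace ℝ X]
    (L : (Fin k → ℝ) →L[ℝ] X) (w : Fin k → ℝ) :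
    L w = ∑ m, w m • L (Pi.single m (1:ℝ)) := by
  conv_lhs => rw [← Finset.univ_sum_single w]
  rw [map_sum]
  refine Finset.sum_congr rfl fun m _ => ?_
  have h1 : (Pi.single m (w m) : Fin k → ℝ) = w m • (Pi.single m (1:ℝ) : Fin k → ℝ) := by
    rw [← Pi.single_smul, smul_eq_mul, mul_one]
  rw [h1, map_smul]

lemma clm_pair_decomp {n k : ℕ} (L : (Sp n × (Fin k → ℝ)) →L[ℝ] ℝ) (v : Sp n) (w : Fin k → ℝ) :
    L (v, w) = L (v, 0) + ∑ m, w m * L (0, Pi.single m 1) := by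
  have h0 : ((v, w) : Sp n × (Fin k → ℝ)) = (v, 0) + (0, w) := by simp
  rw [h0, map_add]
  congr 1
  have := clm_pi_decomp (L.comp (ContinuousLinearMap.inr ℝ (Sp n) (Fin k → ℝ))) w
  simpa [smul_eq_mul] using this

lemma fderiv_frozen_fst {n k : ℕ} (f : Sp n × (Fin k → ℝ) → ℝ) (hf : Differentiable ℝ f)
    (ξ : Sp n) (α : Fin k → ℝ) (v : Sp n) :
    fderiv ℝ (fun x => f (x, α)) ξ v = fderiv ℝ f (ξ, α) (v, 0) := by
  have h1 : HasFDerivAt (fun x : Sp n => (x, α))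
      ((ContinuousLinearMap.id ℝ (Sp n)).prod 0) ξ :=
    HasFDerivAt.prodMk (hasFDerivAt_id ξ) (hasFDerivAt_const α ξ)
  have h2 := ((hf (ξ, α)).hasFDerivAt.comp ξ h1).fderiv
  rw [show (fun x => f (x, α)) = f ∘ (fun x => (x, α)) from rfl, h2]; rfl

lemma fderiv_frozen_snd {n k : ℕ} (f : Sp n × (Fin k → ℝ) → ℝ) (hf : Differentiable ℝ f)
    (ξ : Sp n) (α : Fin k → ℝ) (u : Fin k → ℝ) :
    fderiv ℝ (fun β => f (ξ, β)) α u = fderiv ℝ f (ξ, α) (0, u) := by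
  have h1 : HasFDerivAt (fun β : Fin k → ℝ => (ξ, β))
      ((0 : (Fin k → ℝ) →L[ℝ] Sp n).prod (ContinuousLinearMap.id ℝ _)) α :=
    HasFDerivAt.prodMk (hasFDerivAt_const ξ α) (hasFDerivAt_id α)
  have h2 := ((hf (ξ, α)).hasFDerivAt.comp α h1).fderiv
  rw [show (fun β => f (ξ, β)) = f ∘ (fun β => (ξ, β)) from rfl, h2]; rfl

lemma key_deriv {n k : ℕ} (f : Sp n × (Fin k → ℝ) → ℝ) (hf : Differentiable ℝ f)
    (A : Fin k → Sp n → ℝ) (hA : ∀ m, Differentiable ℝ (A m)) (ξ : Sp n) (v : Sp n) :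
    fderiv ℝ (fun x => f (x, fun m => A m x)) ξ v
      = fderiv ℝ (fun x => f (x, fun m => A m ξ)) ξ v
        + ∑ m, fderiv ℝ (A m) ξ v * fderiv ℝ f (ξ, fun m => A m ξ) (0, Pi.single m 1) := by
  have hAd : HasFDerivAt (fun x : Sp n => fun m => A m x)
      (ContinuousLinearMap.pi fun m => fderiv ℝ (A m) ξ) ξ :=
    hasFDerivAt_pi.2 fun m => (hA m ξ).hasFDerivAt
  have hcomp := ((hf (ξ, fun m => A m ξ)).hasFDerivAt.comp ξ
    (HasFDerivAt.prodMk (hasFDerivAt_id ξ) hAd)).fderiv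
  rw [show (fun x => f (x, fun m => A m x)) = f ∘ (fun x => (id x, fun m => A m x)) from rfl,
    hcomp]
  have happ : (((fderiv ℝ f (ξ, fun m => A m ξ)).comp
      (((ContinuousLinearMap.id ℝ (Sp n)).prod
        (ContinuousLinearMap.pi fun m => fderiv ℝ (A m) ξ)))) v)
      = fderiv ℝ f (ξ, fun m => A m ξ) (v, fun m => fderiv ℝ (A m) ξ v) := rfl
  rw [happ, clm_pair_decomp, fderiv_frozen_fst f hf]

end StackelAux

open StackelAux in
/-- if the Hamiltonians `h₁,…,h_n` pairwise Poisson-commute for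
all values of the parameters `α`, then their multi-parameter Stäckel
transforms `h̃₁,…,h̃_n` pairwise Poisson-commute for all values of `α̃`. -/
theorem stackel_transform_preserves_involutivity
    (n k : ℕ) (hkn : k ≤ n)
    (s : Fin k → Fin n) (hs : Function.Injective s)
    (h htil : Fin n → (Fin n → ℝ) × (Fin n → ℝ) → (Fin k → ℝ) → ℝ)
    (hsmooth : ∀ i, ContDiff ℝ (⊤ : ℕ∞)
      (fun p : ((Fin n → ℝ) × (Fin n → ℝ)) × (Fin k → ℝ) => h i p.1 p.2))
    (htsmooth : ∀ i, ContDiff ℝ (⊤ : ℕ∞)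
      (fun p : ((Fin n → ℝ) × (Fin n → ℝ)) × (Fin k → ℝ) => htil i p.1 p.2))
    -- h_{s_i}(ξ, α) = α̃_i is globally solved by α_i = h̃_{s_i}(ξ, α̃):
    (hid1 : ∀ ξ (αt : Fin k → ℝ) (i : Fin k),
      h (s i) ξ (fun j => htil (s j) ξ αt) = αt i)
    (hid1' : ∀ ξ (α : Fin k → ℝ) (i : Fin k),
      htil (s i) ξ (fun j => h (s j) ξ α) = α i)
    -- the remaining h̃_i are obtained by substituting the solved parameters:
    (hid2 : ∀ ξ (αt : Fin k → ℝ) (i : Fin n), i ∉ Set.range s →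
      htil i ξ αt = h i ξ (fun j => htil (s j) ξ αt))
    -- involutivity of the h_i for all parameter values:
    (hcomm : ∀ (α : Fin k → ℝ) (i j : Fin n) ξ,
      poissonBracket (fun x => h i x α) (fun x => h j x α) ξ = 0) :
    ∀ (αt : Fin k → ℝ) (i j : Fin n) ξ,
      poissonBracket (fun x => htil i x αt) (fun x => htil j x αt) ξ = 0 := by
  intro αt i j ξ₀
  -- differentiability of the uncurried functions
  have hHdiff : ∀ i, Differentiable ℝ (fun p : Sp n × (Fin k → ℝ) => h i p.1 p.2) :=
    fun i => (hsmooth i).differentiable (by simp)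
  have hTdiff : ∀ i, Differentiable ℝ (fun p : Sp n × (Fin k → ℝ) => htil i p.1 p.2) :=
    fun i => (htsmooth i).differentiable (by simp)
  -- the solved parameters as functions of the phase-space point
  set A : Fin k → Sp n → ℝ := fun m x => htil (s m) x αt with hAdef
  have hAdiff : ∀ m, Differentiable ℝ (A m) := by
    intro m
    exact (hTdiff (s m)).comp (differentiable_id.prodMk (differentiable_const αt))
  set α₀ : Fin k → ℝ := fun m => A m ξ₀ with hα₀def
  -- frozen Hamiltonians, substituted Hamiltonians
  set g : Fin n → Sp n → ℝ := fun i x => h i x α₀ with hgdef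
  set F : Fin n → Sp n → ℝ := fun i x => h i x (fun m => A m x) with hFdef
  set dA : Fin k → (Sp n →L[ℝ] ℝ) := fun m => fderiv ℝ (A m) ξ₀ with hdAdef
  set dg : Fin n → (Sp n →L[ℝ] ℝ) := fun i => fderiv ℝ (g i) ξ₀ with hdgdef
  set D : Fin n → Fin k → ℝ :=
    fun i m => fderiv ℝ (fun p : Sp n × (Fin k → ℝ) => h i p.1 p.2) (ξ₀, α₀)
      (0, Pi.single m 1) with hDdef
  -- Key: derivative of the substituted Hamiltonians
  have hK : ∀ i, fderiv ℝ (F i) ξ₀ = dg i + ∑ m, D i m • dA m := by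
    intro i
    refine ContinuousLinearMap.ext fun v => ?_
    have hk := key_deriv (fun p : Sp n × (Fin k → ℝ) => h i p.1 p.2) (hHdiff i) A hAdiff ξ₀ v
    simp only [ContinuousLinearMap.add_apply, ContinuousLinearMap.sum_apply,
      ContinuousLinearMap.coe_smul', Pi.smul_apply, smul_eq_mul]
    rw [show fderiv ℝ (F i) ξ₀ v
        = fderiv ℝ (fun x => h i x (fun m => A m x)) ξ₀ v from rfl, hk]
    congr 1
    exact Finset.sum_congr rfl fun m _ => by rw [mul_comm]
  -- the brackets of frozen Hamiltonians vanish
  have hgg : ∀ i j, pbForm n (dg i) (dg j) = 0 := by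
    intro i j
    have := hcomm α₀ i j ξ₀
    rwa [pb_eq] at this
  -- P and ρ
  set P : Fin k → Fin k → ℝ := fun m l => pbForm n (dA m) (dA l) with hPdef
  set ρ : Fin n → Fin k → ℝ := fun i m => pbForm n (dg i) (dA m) with hρdef
  have hPanti : ∀ m l, P m l = - P l m := fun m l => pbForm_antisymm (dA m) (dA l)
  -- the composed functions F (s a) are constant
  have hFzero : ∀ a : Fin k, fderiv ℝ (F (s a)) ξ₀ = 0 := by
    intro a
    have hconst : F (s a) = fun _ => αt a := funext fun x => hid1 x αt a
    rw [hconst, fderiv_fun_const]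
    rfl
  -- expansion of brackets with F-functions
  have hexpFA : ∀ (i : Fin n) (r : Fin k),
      pbForm n (fderiv ℝ (F i) ξ₀) (dA r) = ρ i r + ∑ m, D i m * P m r := by
    intro i r
    rw [hK i, pb_expand_left]
  have hexpFF : ∀ (i j : Fin n),
      pbForm n (fderiv ℝ (F i) ξ₀) (fderiv ℝ (F j) ξ₀)
        = ∑ l, D j l * ρ i l - ∑ m, D i m * ρ j m
          + ∑ m, ∑ l, D i m * D j l * P m l := by
    intro i j
    rw [hK i, hK j, pb_expand, hgg]
    have e1 : ∀ m, D i m * pbForm n (dA m) (dg j) = -(D i m * ρ j m) := by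
      intro m
      rw [pbForm_antisymm (dA m) (dg j)]
      show D i m * -(pbForm n (dg j) (dA m)) = _
      ring
    rw [Finset.sum_congr rfl fun m _ => e1 m, Finset.sum_neg_distrib]
    ring
  -- matrices
  set Bm : Matrix (Fin k) (Fin k) ℝ := Matrix.of fun a m => D (s a) m with hBdef
  set Cm : Matrix (Fin k) (Fin k) ℝ :=
    Matrix.of fun a b => fderiv ℝ (fun β => htil (s a) ξ₀ β) αt (Pi.single b 1) with hCdef
  -- C * B = 1
  have hCB : Cm * Bm = 1 := by
    ext a r
    rw [Matrix.mul_apply]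
    -- chain rule for α ↦ htil (s a) ξ₀ (fun b => h (s b) ξ₀ α) = α a
    have hχdiff : ∀ b : Fin k, Differentiable ℝ (fun α : Fin k → ℝ => h (s b) ξ₀ α) :=
      fun b => (hHdiff (s b)).comp ((differentiable_const ξ₀).prodMk differentiable_id)
    have hχd : HasFDerivAt (fun α : Fin k → ℝ => fun b => h (s b) ξ₀ α)
        (ContinuousLinearMap.pi fun b => fderiv ℝ (fun α : Fin k → ℝ => h (s b) ξ₀ α) α₀) α₀ :=
      hasFDerivAt_pi.2 fun b => (hχdiff b α₀).hasFDerivAt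
    have hχα₀ : (fun b => h (s b) ξ₀ α₀) = αt := funext fun b => hid1 ξ₀ αt b
    have hψdiff : Differentiable ℝ (fun β : Fin k → ℝ => htil (s a) ξ₀ β) :=
      (hTdiff (s a)).comp ((differentiable_const ξ₀).prodMk differentiable_id)
    have hψd : HasFDerivAt (fun β : Fin k → ℝ => htil (s a) ξ₀ β)
        (fderiv ℝ (fun β : Fin k → ℝ => htil (s a) ξ₀ β) αt) ((fun b => h (s b) ξ₀ α₀)) := by
      rw [hχα₀]
      exact (hψdiff αt).hasFDerivAt
    have hcompd := (hψd.comp α₀ hχd).fderiv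
    have hident : ((fun β : Fin k → ℝ => htil (s a) ξ₀ β) ∘
        (fun α : Fin k → ℝ => fun b => h (s b) ξ₀ α)) = fun α : Fin k → ℝ => α a :=
      funext fun α => hid1' ξ₀ α a
    rw [hident] at hcompd
    have heval : fderiv ℝ (fun α : Fin k → ℝ => α a) α₀
        = (ContinuousLinearMap.proj a : (Fin k → ℝ) →L[ℝ] ℝ) :=
      (ContinuousLinearMap.proj a : (Fin k → ℝ) →L[ℝ] ℝ).fderiv
    -- apply both sides of hcompd to Pi.single r 1
    have happlied := congrArg (fun (L : (Fin k → ℝ) →L[ℝ] ℝ) => L (Pi.single r 1)) hcompd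
    rw [heval] at happlied
    simp only [ContinuousLinearMap.proj_apply, ContinuousLinearMap.coe_comp',
      Function.comp_apply] at happlied
    -- LHS of happlied : Pi.single r 1 a ; RHS : fderiv ψ αt (pi ... (single r 1))
    rw [clm_pi_decomp] at happlied
    have hBval : ∀ b : Fin k,
        (ContinuousLinearMap.pi fun b => fderiv ℝ (fun α : Fin k → ℝ => h (s b) ξ₀ α) α₀)
          (Pi.single r 1) b = Bm b r := by
      intro b
      show fderiv ℝ (fun α : Fin k → ℝ => h (s b) ξ₀ α) α₀ (Pi.single r 1) = Bm b r
      rw [fderiv_frozen_snd _ (hHdiff (s b))]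
      rfl
    have : (Pi.single r (1:ℝ) : Fin k → ℝ) a
        = ∑ b, Bm b r * Cm a b := by
      rw [happlied]
      exact Finset.sum_congr rfl fun b _ => by rw [hBval b, smul_eq_mul]; rfl
    rw [Finset.sum_congr rfl fun b _ => (mul_comm (Cm a b) (Bm b r)), ← this,
      Pi.single_apply, Matrix.one_apply]
  have hBC : Bm * Cm = 1 := mul_eq_one_comm.mp hCB
  -- inversion helper for vectors
  have hinv : ∀ v : Fin k → ℝ, (∀ b, ∑ l, Bm b l * v l = 0) → v = 0 := by
    intro v hv
    have hv' : Bm.mulVec v = 0 := by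
      funext b
      simpa [Matrix.mulVec, dotProduct] using hv b
    calc v = (1 : Matrix (Fin k) (Fin k) ℝ).mulVec v := (Matrix.one_mulVec v).symm
    _ = (Cm * Bm).mulVec v := by rw [hCB]
    _ = Cm.mulVec (Bm.mulVec v) := (Matrix.mulVec_mulVec v Cm Bm).symm
    _ = 0 := by rw [hv', Matrix.mulVec_zero]
  -- Step 1 : brackets with the constant functions F (s a) vanish
  have hFA0 : ∀ (a r : Fin k), ρ (s a) r + ∑ m, D (s a) m * P m r = 0 := by
    intro a r
    rw [← hexpFA (s a) r, hFzero a]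
    simp
  have hFF0 : ∀ a b : Fin k,
      ∑ l, D (s b) l * ρ (s a) l - ∑ m, D (s a) m * ρ (s b) m
        + ∑ m, ∑ l, D (s a) m * D (s b) l * P m l = 0 := by
    intro a b
    rw [← hexpFF (s a) (s b), hFzero a]
    simp
  -- Step 2 : ∑_l B b l * ρ (s a) l = 0
  have hsum0 : ∀ a b : Fin k, ∑ l, Bm b l * ρ (s a) l = 0 := by
    intro a b
    have h2 := hFF0 a b
    -- substitute ρ (s b) m = -∑ l D (s b) l * P l m
    have hsub : ∀ m, D (s a) m * ρ (s b) m
        = - ∑ l, D (s a) m * (D (s b) l * P l m) := by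
      intro m
      have := hFA0 b m
      have hρval : ρ (s b) m = - ∑ l, D (s b) l * P l m := by linarith [this]
      rw [hρval, mul_neg, Finset.mul_sum]
    rw [Finset.sum_congr rfl fun m _ => hsub m, Finset.sum_neg_distrib] at h2
    -- now : ∑ l D (s b) l ρ (s a) l + ∑∑ D sa m D sb l P l m + ∑∑ D sa m D sb l P m l = 0
    have hcancel : ∑ m, ∑ l, D (s a) m * (D (s b) l * P l m)
        = - ∑ m, ∑ l, D (s a) m * D (s b) l * P m l := by
      rw [← Finset.sum_neg_distrib]
      refine Finset.sum_congr rfl fun m _ => ?_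
      rw [← Finset.sum_neg_distrib]
      refine Finset.sum_congr rfl fun l _ => ?_
      rw [hPanti l m]
      ring
    rw [hcancel] at h2
    have : ∑ l, D (s b) l * ρ (s a) l = 0 := by linarith [h2]
    simpa [hBdef] using this
  have hρs0 : ∀ a : Fin k, ρ (s a) = 0 := fun a => hinv _ (hsum0 a)
  have hρsz : ∀ (a m' : Fin k), ρ (s a) m' = 0 := fun a m' => congrFun (hρs0 a) m'
  -- Step 3 : P = 0 via B * P = 0
  have hBP : Bm * (Matrix.of P) = 0 := by
    ext a l
    rw [Matrix.mul_apply]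
    have := hFA0 a l
    rw [hρs0 a] at this
    simpa [hBdef] using this
  have hP0 : ∀ m l, P m l = 0 := by
    intro m l
    have : (Matrix.of P) = 0 := by
      calc (Matrix.of P) = (1 : Matrix (Fin k) (Fin k) ℝ) * Matrix.of P := (one_mul _).symm
      _ = (Cm * Bm) * Matrix.of P := by rw [hCB]
      _ = Cm * (Bm * Matrix.of P) := Matrix.mul_assoc _ _ _
      _ = 0 := by rw [hBP, Matrix.mul_zero]
    have := congrFun (congrFun this m) l
    simpa using this
  -- Step 4 : all ρ vanish
  have hρ0 : ∀ i : Fin n, ρ i = 0 := by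
    intro i
    refine hinv _ fun b => ?_
    have h2 := hexpFF i (s b)
    rw [hFzero b] at h2
    simp only [map_zero] at h2
    -- 0 = ∑ l D (s b) l ρ i l - ∑ m D i m ρ (s b) m + ∑∑ D i m D (s b) l P m l
    have hz1 : ∑ m, D i m * ρ (s b) m = 0 :=
      Finset.sum_eq_zero fun m _ => by rw [hρsz b m, mul_zero]
    have hz2 : ∑ m, ∑ l, D i m * D (s b) l * P m l = 0 :=
      Finset.sum_eq_zero fun m _ => Finset.sum_eq_zero fun l _ => by rw [hP0 m l, mul_zero]
    rw [hz1, hz2] at h2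
    have : ∑ l, D (s b) l * ρ i l = 0 := by linarith [h2]
    simpa [hBdef] using this
  have hρz : ∀ (i : Fin n) (m' : Fin k), ρ i m' = 0 := fun i m' => congrFun (hρ0 i) m'
  -- Final assembly
  rw [pb_eq]
  by_cases hi : i ∈ Set.range s
  · obtain ⟨a, rfl⟩ := hi
    have hfa : fderiv ℝ (fun x => htil (s a) x αt) ξ₀ = dA a := rfl
    rw [hfa]
    by_cases hj : j ∈ Set.range s
    · obtain ⟨b, rfl⟩ := hj
      have hfb : fderiv ℝ (fun x => htil (s b) x αt) ξ₀ = dA b := rfl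
      rw [hfb]
      exact hP0 a b
    · have hfb : (fun x => htil j x αt) = F j := funext fun x => hid2 x αt j hj
      rw [hfb, pbForm_antisymm, hexpFA j a, hρz j a,
        Finset.sum_eq_zero (fun m _ => by rw [hP0 m a, mul_zero] :
          ∀ m ∈ Finset.univ, D j m * P m a = 0)]
      simp
  · have hfa : (fun x => htil i x αt) = F i := funext fun x => hid2 x αt i hi
    rw [hfa]
    by_cases hj : j ∈ Set.range s
    · obtain ⟨b, rfl⟩ := hj
      have hfb : fderiv ℝ (fun x => htil (s b) x αt) ξ₀ = dA b := rfl
      rw [hfb, hexpFA i b, hρz i b,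
        Finset.sum_eq_zero (fun m _ => by rw [hP0 m b, mul_zero] :
          ∀ m ∈ Finset.univ, D i m * P m b = 0)]
      simp
    · have hfb : (fun x => htil j x αt) = F j := funext fun x => hid2 x αt j hj
      rw [hfb, hexpFF i j]
      have hz1 : ∑ l, D j l * ρ i l = 0 :=
        Finset.sum_eq_zero fun l _ => by rw [hρz i l, mul_zero]
      have hz2 : ∑ m, D i m * ρ j m = 0 :=
        Finset.sum_eq_zero fun m _ => by rw [hρz j m, mul_zero]
      have hz3 : ∑ m, ∑ l, D i m * D j l * P m l = 0 :=
        Finset.sum_eq_zero fun m _ => Finset.sum_eq_zero fun l _ => by rw [hP0 m l, mul_zero]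
      rw [hz1, hz2, hz3]
      ring
end

section
/- (Stäckel transform of Lax equations) Suppose a Liouville integrable system with Hamiltonians h_i(ξ,α) admits a Lax representation L_{t_j} = [U_j, L], j = 1,…,n, where L = L(λ,ξ,α) and U_j = U_j(λ,ξ,α) are matrix functions of the spectral parameter λ. Then the Stäckel-transformed system with Hamiltonians h̃_i(ξ,α̃) admits the Lax representation L̃_{t̃_j} = [Ũ_j, L̃], where L̃(λ,ξ,α̃) = L(λ,ξ,h̃(ξ,α̃)) and Ũ_j(λ,ξ,α̃) = Σ_{i=1}^n (A^{-1})_{ji}(ξ,h̃(ξ,α̃)) U_i(λ,ξ,h̃(ξ,α̃)). -/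
attribute [local instance] Matrix.normedAddCommGroup Matrix.normedSpace

/-- Stäckel transform of Lax equations.  If the system with
Hamiltonians `h_i(ξ,α)` (with flows generated by the Hamiltonian vector fields
`X i ξ α`) has the Lax representation `L_{t_j} = [U_j, L]`, and the flows
`Xt j` of the Stäckel transformed Hamiltonians satisfy
`∂/∂t̃_j = ∑_i (A⁻¹)_{ji} ∂/∂t_i` (with the parameters substituted by
`α = h̃(ξ,α̃)`, given by `htil`) while each `h̃_l` is constant along each flow
`t̃_j`, then the transformed system has the Lax representation
`L̃_{t̃_j} = [Ũ_j, L̃]` with `L̃(λ,ξ,α̃) = L(λ,ξ,h̃(ξ,α̃))` and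
`Ũ_j = ∑_i (A⁻¹)_{ji} U_i(λ,ξ,h̃(ξ,α̃))`. -/
theorem stackel_transform_of_lax_equations
    (E : Type*) [NormedAddCommGroup E] [NormedSpace ℝ E]
    (n k m : ℕ)
    (L : ℝ → E → (Fin k → ℝ) → Matrix (Fin m) (Fin m) ℝ)
    (U : Fin n → ℝ → E → (Fin k → ℝ) → Matrix (Fin m) (Fin m) ℝ)
    (X Xt : Fin n → E → (Fin k → ℝ) → E)
    (htil : Fin k → E → (Fin k → ℝ) → ℝ)
    (Ainv : Fin n → Fin n → E → (Fin k → ℝ) → ℝ)  -- (A⁻¹)_{j i}(ξ, α)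
    (hLsmooth : ∀ lam : ℝ,
      ContDiff ℝ (⊤ : ℕ∞) (fun p : E × (Fin k → ℝ) => L lam p.1 p.2))
    (hhsmooth : ∀ (i : Fin k) (αt : Fin k → ℝ),
      ContDiff ℝ (⊤ : ℕ∞) (fun x : E => htil i x αt))
    -- the Lax representation L_{t_j} = [U_j, L] of the original system:
    (hLax : ∀ (j : Fin n) (lam : ℝ) (ξ : E) (α : Fin k → ℝ),
      fderiv ℝ (fun x => L lam x α) ξ (X j ξ α)
        = U j lam ξ α * L lam ξ α - L lam ξ α * U j lam ξ α)
    -- ∂/∂t̃_j = ∑_i (A⁻¹)_{ji} ∂/∂t_i on the joint level sets: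
    (hflow : ∀ (j : Fin n) (ξ : E) (αt : Fin k → ℝ),
      Xt j ξ αt = ∑ i : Fin n,
        Ainv j i ξ (fun l => htil l ξ αt) • X i ξ (fun l => htil l ξ αt))
    -- each h̃_l is constant along each flow t̃_j:
    (hconst : ∀ (j : Fin n) (l : Fin k) (ξ : E) (αt : Fin k → ℝ),
      fderiv ℝ (fun x => htil l x αt) ξ (Xt j ξ αt) = 0) :
    ∀ (j : Fin n) (lam : ℝ) (ξ : E) (αt : Fin k → ℝ),
      fderiv ℝ (fun x => L lam x (fun l => htil l x αt)) ξ (Xt j ξ αt)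
        = (∑ i : Fin n, Ainv j i ξ (fun l => htil l ξ αt) •
              U i lam ξ (fun l => htil l ξ αt)) * L lam ξ (fun l => htil l ξ αt)
          - L lam ξ (fun l => htil l ξ αt) *
            ∑ i : Fin n, Ainv j i ξ (fun l => htil l ξ αt) •
              U i lam ξ (fun l => htil l ξ αt) := by
  intro j lam ξ αt
  set α₀ : Fin k → ℝ := fun l => htil l ξ αt with hα₀
  have hF : Differentiable ℝ (fun p : E × (Fin k → ℝ) => L lam p.1 p.2) :=
    (hLsmooth lam).differentiable (by simp)
  -- derivative of the parameter map
  have hh : ∀ l, DifferentiableAt ℝ (fun x : E => htil l x αt) ξ :=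
    fun l => ((hhsmooth l αt).differentiable (by simp)).differentiableAt
  have hg : HasFDerivAt (fun x : E => (x, fun l => htil l x αt))
      ((ContinuousLinearMap.id ℝ E).prod
        (ContinuousLinearMap.pi (fun l => fderiv ℝ (fun x => htil l x αt) ξ))) ξ := by
    exact HasFDerivAt.prodMk (hasFDerivAt_id ξ)
      (hasFDerivAt_pi.2 fun l => (hh l).hasFDerivAt)
  have hcomp : HasFDerivAt (fun x : E => L lam x (fun l => htil l x αt))
      ((fderiv ℝ (fun p : E × (Fin k → ℝ) => L lam p.1 p.2) (ξ, α₀)).comp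
        ((ContinuousLinearMap.id ℝ E).prod
          (ContinuousLinearMap.pi (fun l => fderiv ℝ (fun x => htil l x αt) ξ)))) ξ :=
    by have := ((hF (ξ, α₀)).hasFDerivAt).comp ξ hg; exact this
  -- partial derivative in the first slot
  have hpart : ∀ v : E,
      fderiv ℝ (fun x => L lam x α₀) ξ v
        = fderiv ℝ (fun p : E × (Fin k → ℝ) => L lam p.1 p.2) (ξ, α₀) (v, 0) := by
    intro v
    have h1 : HasFDerivAt (fun x : E => (x, α₀))
        (ContinuousLinearMap.inl ℝ E (Fin k → ℝ)) ξ :=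
      HasFDerivAt.prodMk (hasFDerivAt_id ξ) (hasFDerivAt_const _ _)
    have h2 : HasFDerivAt (fun x : E => L lam x α₀)
        ((fderiv ℝ (fun p : E × (Fin k → ℝ) => L lam p.1 p.2) (ξ, α₀)).comp
          (ContinuousLinearMap.inl ℝ E (Fin k → ℝ))) ξ :=
      by have := ((hF (ξ, α₀)).hasFDerivAt).comp ξ h1; exact this
    rw [h2.fderiv]
    rfl
  have key : fderiv ℝ (fun x => L lam x (fun l => htil l x αt)) ξ (Xt j ξ αt)
      = fderiv ℝ (fun x => L lam x α₀) ξ (Xt j ξ αt) := by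
    rw [hcomp.fderiv, hpart]
    simp only [ContinuousLinearMap.comp_apply, ContinuousLinearMap.prod_apply,
      ContinuousLinearMap.coe_id', id_eq]
    congr 1
    ext v
    · rfl
    · simpa using hconst j v ξ αt
  rw [key, hflow j ξ αt]
  have clm := fderiv ℝ (fun x => L lam x α₀) ξ
  rw [map_sum]
  have : ∀ i : Fin n,
      fderiv ℝ (fun x => L lam x α₀) ξ (Ainv j i ξ α₀ • X i ξ α₀)
        = Ainv j i ξ α₀ • (U i lam ξ α₀ * L lam ξ α₀ - L lam ξ α₀ * U i lam ξ α₀) := by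
    intro i
    rw [map_smul, hLax i lam ξ α₀]
  simp only [hα₀] at this
  simp only [this, smul_sub, smul_mul_assoc, mul_smul_comm, hα₀]
  simp [smul_mul_assoc, mul_smul_comm, Finset.mul_sum, Finset.sum_mul]
end

section
/- Let ρ_i(λ) = (−1)^i σ_i(λ_1,…,λ_n) where σ_i is the i-th elementary symmetric polynomial, let R be the n×n companion-type matrix with first column (−ρ_1,…,−ρ_n)^T, superdiagonal entries 1 and all other entries 0, and define V^{(β)} = R^β V^{(0)} with V^{(0)} = (0,…,0,−1)^T, for β ∈ ℤ (using R^{-1} for negative β, assuming ρ_n ≠ 0). Then for every β ∈ ℤ, the components V_j^{(β)} satisfy the n identities λ_i^β + Σ_{j=1}^n V_j^{(β)} λ_i^{n−j} = 0 for i = 1,…,n, provided the λ_i are pairwise distinct. -/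
/-!
Let `M` be the reversed Vandermonde matrix `M i j = λ_i ^ (n-1-j)`. Since `λ_i` is a root of
`∏ₖ (x - λ_k) = ∑ⱼ ρ_j x^(n-j)`, the rows of `M` are left eigenvectors of `R`:
`M R = diag(λ) M`. Distinct `λ_i` make `M` invertible, so `det R = ∏ λ_i ≠ 0` and the
relation passes to all integer powers, `M R^β = diag(λ^β) M`. Applied to `V⁽⁰⁾`, for which
`M V⁽⁰⁾ = (-1,…,-1)`, it gives `∑ⱼ V_j^(β) λ_i^(n-1-j) = -λ_i^β`.
-/

open scoped BigOperators Matrix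

/-- The `i`-th elementary symmetric polynomial of `l 0, …, l (n-1)`. -/
noncomputable def esym (n : ℕ) (l : Fin n → ℝ) (i : ℕ) : ℝ :=
  ∑ t ∈ Finset.powersetCard i (Finset.univ : Finset (Fin n)), ∏ j ∈ t, l j

/-- The Benenti recursion matrix `R` (eq. (6a)): first column `(-ρ₁,…,-ρ_n)ᵀ`
with `ρ_i = (-1)^i σ_i`, superdiagonal entries `1`, all other entries `0`. -/
noncomputable def benentiR (n : ℕ) (l : Fin n → ℝ) : Matrix (Fin n) (Fin n) ℝ :=
  fun i j =>
    if (j : ℕ) = 0 then -((-1 : ℝ) ^ ((i : ℕ) + 1) * esym n l ((i : ℕ) + 1))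
    else if (j : ℕ) = (i : ℕ) + 1 then 1 else 0

/-- `V⁽⁰⁾ = (0,…,0,-1)ᵀ`. -/
noncomputable def benentiV0 (n : ℕ) : Fin n → ℝ :=
  fun j => if (j : ℕ) = n - 1 then -1 else 0

open Matrix Polynomial

theorem Multiset.sum_neg_one_pow_mul_esymm_mul_pow_eq_zero {R : Type*} [CommRing R]
    {s : Multiset R} {x : R} (hx : x ∈ s) :
    ∑ j ∈ Finset.range (card s + 1), (-1) ^ j * (s.esymm j * x ^ (card s - j)) = 0 := by
  have h := congrArg (eval x) (prod_X_sub_X_eq_sum_esymm s)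
  rw [eval_multiset_prod, Multiset.map_map,
    Multiset.prod_eq_zero (Multiset.mem_map.mpr ⟨x, hx, by simp⟩)] at h
  simpa [eval_finsetSum] using h.symm

theorem Matrix.diagonal_zpow {ι K : Type*} [Fintype ι] [DecidableEq ι] [Field K] {d : ι → K}
    (hd : ∀ i, d i ≠ 0) (m : ℤ) : diagonal d ^ m = diagonal fun i => d i ^ m := by
  cases m with
  | ofNat k => simp [diagonal_pow]
  | negSucc k =>
    rw [zpow_negSucc, diagonal_pow]
    refine inv_eq_left_inv ?_
    rw [diagonal_mul_diagonal, ← diagonal_one]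
    congr 1
    ext i
    rw [zpow_negSucc, Pi.pow_apply, inv_mul_cancel₀ (pow_ne_zero _ (hd i))]

section

variable {R : Type*} [CommRing R] {n : ℕ}

def revVandermonde (v : Fin n → R) : Matrix (Fin n) (Fin n) R :=
  Matrix.of fun i j => v i ^ (n - 1 - (j : ℕ))

theorem revVandermonde_mulVec_apply (v w : Fin n → R) (i : Fin n) :
    (revVandermonde v *ᵥ w) i = ∑ j, w j * v i ^ (n - 1 - (j : ℕ)) := by
  simp only [mulVec, dotProduct, revVandermonde, of_apply, mul_comm]

theorem revVandermonde_eq_submatrix (v : Fin n → R) :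
    revVandermonde v = (vandermonde v).submatrix id Fin.revPerm := by
  ext i j
  simp only [revVandermonde, of_apply, submatrix_apply, id, Fin.revPerm_apply, vandermonde_apply,
    Fin.val_rev]
  congr 1
  omega

theorem det_revVandermonde_ne_zero [IsDomain R] {v : Fin n → R} (hv : Function.Injective v) :
    (revVandermonde v).det ≠ 0 := by
  rw [revVandermonde_eq_submatrix, det_permute']
  exact mul_ne_zero ((Equiv.Perm.sign _).isUnit.map (Int.castRingHom R)).ne_zero
    (det_vandermonde_ne_zero_iff.mpr hv)

end

theorem esym_eq_esymm (n : ℕ) (l : Fin n → ℝ) (k : ℕ) :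
    esym n l k = ((Finset.univ : Finset (Fin n)).val.map l).esymm k :=
  (Finset.esymm_map_val l _ k).symm

-- The coefficients are the first column of `benentiR`.
theorem pow_eq_sum_esym_mul_pow (n : ℕ) (l : Fin n → ℝ) (i : Fin n) :
    l i ^ n = ∑ j : Fin n, -((-1) ^ ((j : ℕ) + 1) * esym n l ((j : ℕ) + 1)) *
      l i ^ (n - 1 - (j : ℕ)) := by
  have h := Multiset.sum_neg_one_pow_mul_esymm_mul_pow_eq_zero
    (Multiset.mem_map_of_mem l (Finset.mem_univ_val i))
  simp only [Multiset.card_map, Finset.card_val, Finset.card_univ, Fintype.card_fin,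
    ← esym_eq_esymm] at h
  rw [Finset.sum_range_succ', Fin.sum_univ_eq_sum_range
    (fun j => -((-1) ^ (j + 1) * esym n l (j + 1)) * l i ^ (n - 1 - j))] at *
  have hesym_zero : esym n l 0 = 1 := by simp [esym]
  simp only [pow_zero, one_mul, hesym_zero, Nat.sub_zero, Nat.sub_sub,
    add_comm 1, neg_mul, mul_assoc, Finset.sum_neg_distrib] at h ⊢
  linear_combination h

theorem revVandermonde_mul_benentiR (n : ℕ) (l : Fin n → ℝ) :
    revVandermonde l * benentiR n l = diagonal l * revVandermonde l := by
  ext i k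
  rw [mul_apply, diagonal_mul]
  simp only [revVandermonde, of_apply]
  by_cases hk : (k : ℕ) = 0
  · have hn : n - 1 + 1 = n := Nat.sub_add_cancel i.pos
    rw [hk, Nat.sub_zero, ← pow_succ', hn, pow_eq_sum_esym_mul_pow n l i]
    simp only [benentiR, hk, if_true, mul_comm]
  · let k' : Fin n := ⟨k - 1, by omega⟩
    rw [Finset.sum_eq_single k']
    · have hexp : n - 1 - (k' : ℕ) = n - 1 - k + 1 := by simp only [k']; omega
      have hsup : (k : ℕ) = k' + 1 := by simp only [k']; omega
      rw [benentiR, if_neg hk, if_pos hsup, hexp, pow_succ, mul_one, mul_comm]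
    · intro j _ hj
      have : (k : ℕ) ≠ j + 1 := fun h => hj (Fin.ext (by simp only [k']; omega))
      simp only [benentiR, hk, this, if_false, mul_zero]
    · simp

theorem det_benentiR {n : ℕ} {l : Fin n → ℝ} (hl : Function.Injective l) :
    (benentiR n l).det = ∏ i, l i := by
  have h := congrArg det (revVandermonde_mul_benentiR n l)
  rw [det_mul, det_mul, det_diagonal, mul_comm] at h
  exact mul_right_cancel₀ (det_revVandermonde_ne_zero hl) h

theorem revVandermonde_mul_benentiR_zpow {n : ℕ} {l : Fin n → ℝ} (hl : Function.Injective l)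
    (hl0 : ∀ i, l i ≠ 0) (β : ℤ) :
    revVandermonde l * benentiR n l ^ β = diagonal (fun i => l i ^ β) * revVandermonde l := by
  have hR : IsUnit (benentiR n l).det := by
    rw [det_benentiR hl]
    exact (Finset.prod_ne_zero_iff.mpr fun i _ => hl0 i).isUnit
  have hD : IsUnit (diagonal l).det := by
    rw [det_diagonal]
    exact (Finset.prod_ne_zero_iff.mpr fun i _ => hl0 i).isUnit
  rw [← diagonal_zpow hl0]
  exact Matrix.SemiconjBy.zpow_right hR hD (revVandermonde_mul_benentiR n l) β

theorem revVandermonde_mulVec_benentiV0 (n : ℕ) (l : Fin n → ℝ) :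
    revVandermonde l *ᵥ benentiV0 n = fun _ => -1 := by
  ext i
  rw [mulVec, dotProduct, Finset.sum_eq_single ⟨n - 1, Nat.sub_lt i.pos one_pos⟩]
  · simp [revVandermonde, benentiV0]
  · intro j _ hj
    have : (j : ℕ) ≠ n - 1 := fun h => hj (Fin.ext h)
    simp [benentiV0, this]
  · simp

theorem benenti_potentials_satisfy_defining_equations_general
    (n : ℕ) (l : Fin n → ℝ)
    (hdist : Function.Injective l) (hne : ∀ i, l i ≠ 0) :
    ∀ (β : ℤ) (i : Fin n),
      (l i) ^ β +
        ∑ j : Fin n, (((benentiR n l) ^ β) *ᵥ (benentiV0 n)) j *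
          (l i) ^ ((n : ℤ) - 1 - (j : ℕ)) = 0 := by
  intro β i
  have h := congrFun
    (congrArg (· *ᵥ benentiV0 n) (revVandermonde_mul_benentiR_zpow hdist hne β)) i
  simp only [← mulVec_mulVec, revVandermonde_mulVec_benentiV0, mulVec_diagonal] at h
  have hexp (j : Fin n) : (l i) ^ ((n : ℤ) - 1 - (j : ℕ)) = l i ^ (n - 1 - (j : ℕ)) := by
    rw [← zpow_natCast]
    congr 1
    omega
  rw [revVandermonde_mulVec_apply] at h
  simp only [hexp, h]
  ring

/-- for pairwise distinct nonzero `λ_i`, the vectors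
`V^{(β)} = R^β V^{(0)}` (with `β ∈ ℤ`) satisfy, for every `i`,
`λ_i^β + ∑_j V_j^{(β)} λ_i^{n-j} = 0`. -/
theorem benenti_potentials_satisfy_defining_equations
    (n : ℕ) (hn : 0 < n) (l : Fin n → ℝ)
    (hdist : Function.Injective l) (hne : ∀ i, l i ≠ 0) :
    ∀ (β : ℤ) (i : Fin n),
      (l i) ^ β +
        ∑ j : Fin n, (((benentiR n l) ^ β) *ᵥ (benentiV0 n)) j *
          (l i) ^ ((n : ℤ) - 1 - (j : ℕ)) = 0 :=
  benenti_potentials_satisfy_defining_equations_general n l hdist hne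
end

section
/- Let u(λ) = Π_{k=1}^n (λ − λ_k) and let V_1^{(m)} denote the first component of the basic separable potential vector V^{(m)} (defined by λ_i^m + Σ_j V_j^{(m)} λ_i^{n−j} = 0 for all i). Then for any s ∈ ℕ, the polynomial part of λ^{n+s}/u(λ) is [λ^{n+s}/u(λ)]_+ = −Σ_{r=0}^{s} V_1^{(n+s−r−1)} λ^r. -/
open Polynomial
open scoped BigOperators

/-- with `u(λ) = ∏ (λ - λ_k)` and `V_1^{(m)}` the first component
of the basic separable potentials (defined by
`λ_i^m + ∑_j V_j^{(m)} λ_i^{n-j} = 0` for all `i`), the polynomial part of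
`λ^{n+s}/u(λ)` is `[λ^{n+s}/u(λ)]_+ = -∑_{r=0}^{s} V_1^{(n+s-r-1)} λ^r`. -/
theorem polynomial_part_positive_powers
    (n s : ℕ) (hn : 0 < n) (l : Fin n → ℝ) (hdist : Function.Injective l)
    (V : ℕ → Fin n → ℝ)
    (hV : ∀ (m : ℕ) (i : Fin n),
      (l i) ^ m + ∑ j : Fin n, V m j * (l i) ^ (n - 1 - (j : ℕ)) = 0) :
    (X ^ (n + s) : ℝ[X]) /ₘ (∏ k : Fin n, (X - C (l k)))
      = ∑ r ∈ Finset.range (s + 1), C (-(V (n + s - r - 1) ⟨0, hn⟩)) * X ^ r := by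
  set u : ℝ[X] := ∏ k : Fin n, (X - C (l k)) with hu_def
  have hu : u.Monic := monic_prod_of_monic _ _ (fun k _ => monic_X_sub_C _)
  have hdegu : u.natDegree = n := by
    rw [hu_def, natDegree_prod _ _ (fun k _ => X_sub_C_ne_zero (l k))]
    simp
  have hdegreeu : u.degree = (n : WithBot ℕ) := by
    rw [degree_eq_natDegree hu.ne_zero, hdegu]
  have hueval : ∀ i, u.eval (l i) = 0 := by
    intro i
    rw [hu_def, eval_prod]
    exact Finset.prod_eq_zero (Finset.mem_univ i) (by simp)
  set p : ℕ → ℝ[X] := fun m => ∑ j : Fin n, C (V m j) * X ^ (n - 1 - (j : ℕ))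
    with hp_def
  have hpval : ∀ m i, (p m).eval (l i) = -((l i) ^ m) := by
    intro m i
    have := hV m i
    simp only [hp_def, eval_finset_sum, eval_mul, eval_C, eval_pow, eval_X]
    linarith
  have hpdeg : ∀ m, (p m).degree < (n : WithBot ℕ) := by
    intro m
    refine lt_of_le_of_lt (degree_sum_le _ _) ?_
    rw [Finset.sup_lt_iff (by exact_mod_cast WithBot.bot_lt_coe n)]
    intro j _
    refine lt_of_le_of_lt (degree_C_mul_X_pow_le _ _) ?_
    exact_mod_cast (by omega : n - 1 - (j : ℕ) < n)
  have hpcoeff_top : ∀ m k, n ≤ k → (p m).coeff k = 0 := by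
    intro m k hk
    apply coeff_eq_zero_of_degree_lt
    exact lt_of_lt_of_le (hpdeg m) (by exact_mod_cast hk)
  have hpcoeff : ∀ m, (p m).coeff (n - 1) = V m ⟨0, hn⟩ := by
    intro m
    rw [hp_def]
    simp only [finset_sum_coeff, coeff_C_mul, coeff_X_pow]
    rw [Finset.sum_eq_single (⟨0, hn⟩ : Fin n)]
    · simp
    · intro j _ hj
      have hj' : (j : ℕ) ≠ 0 := by
        intro h; apply hj; exact Fin.ext h
      have hne : ¬ (n - 1 = n - 1 - (j : ℕ)) := by
        have := j.isLt; omega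
      rw [if_neg hne, mul_zero]
    · simp
  have hzero : ∀ q : ℝ[X], q.degree < (n : WithBot ℕ) →
      (∀ i, q.eval (l i) = 0) → q = 0 := by
    intro q h1 h2
    rcases eq_or_ne q 0 with h0 | h0
    · exact h0
    · refine eq_zero_of_natDegree_lt_card_of_eval_eq_zero q hdist h2 ?_
      rw [Fintype.card_fin]
      exact (natDegree_lt_iff_degree_lt h0).2 h1
  -- first key fact : V (n-1) 0 = -1
  have key1 : V (n - 1) ⟨0, hn⟩ = -1 := by
    have h0 : p (n - 1) + X ^ (n - 1) = 0 := by
      apply hzero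
      · refine lt_of_le_of_lt (degree_add_le _ _) (max_lt (hpdeg _) ?_)
        rw [degree_X_pow]
        exact_mod_cast (by omega : n - 1 < n)
      · intro i
        simp [hpval]
    have h1 := congrArg (fun q : ℝ[X] => q.coeff (n - 1)) h0
    simp only [coeff_add, coeff_zero, coeff_X_pow] at h1
    rw [hpcoeff] at h1
    simp at h1
    linarith
  -- second key fact : p n = u - X ^ n
  have key2 : p n = u - X ^ n := by
    have hXu : (X ^ n - u : ℝ[X]).degree < (n : WithBot ℕ) := by
      have : ((X : ℝ[X]) ^ n - u).degree < (X ^ n : ℝ[X]).degree := by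
        apply degree_sub_lt
        · rw [degree_X_pow, hdegreeu]
        · exact pow_ne_zero _ X_ne_zero
        · simp [hu.leadingCoeff]
      rwa [degree_X_pow] at this
    have h0 : p n + (X ^ n - u) = 0 := by
      apply hzero
      · exact lt_of_le_of_lt (degree_add_le _ _) (max_lt (hpdeg _) hXu)
      · intro i
        simp [hpval, hueval]
    have : p n = -(X ^ n - u) := by linear_combination h0
    rw [this]; ring
  -- recursion : p (m+1) = X * p m - C (V m 0) * u
  have key3 : ∀ m, p (m + 1) = X * p m - C (V m ⟨0, hn⟩) * u := by
    intro m
    have h0 : p (m + 1) - X * p m + C (V m ⟨0, hn⟩) * u = 0 := by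
      apply hzero
      · rw [degree_lt_iff_coeff_zero]
        intro k hk
        have hk' : n ≤ k := by exact_mod_cast hk
        obtain ⟨k', rfl⟩ : ∃ k', k = k' + 1 := ⟨k - 1, by omega⟩
        simp only [coeff_add, coeff_sub, coeff_X_mul, coeff_C_mul]
        rcases eq_or_lt_of_le hk' with heq | hlt
        · have hcu : u.coeff (k' + 1) = 1 := by
            have h2 := hu.coeff_natDegree
            rwa [hdegu, heq] at h2
          rw [hpcoeff_top _ _ (by omega), hcu,
            (by omega : k' = n - 1), hpcoeff]
          ring
        · have hcu : u.coeff (k' + 1) = 0 :=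
            coeff_eq_zero_of_natDegree_lt (by omega)
          rw [hpcoeff_top _ _ (by omega), hpcoeff_top _ _ (by omega), hcu]
          ring
      · intro i
        simp only [eval_add, eval_sub, eval_mul, eval_X, eval_C, hpval, hueval,
          mul_zero, add_zero]
        rw [pow_succ]
        ring
    linear_combination h0
  -- main identity by induction on s
  have main : ∀ t : ℕ, (X ^ (n + t) : ℝ[X]) =
      u * (∑ r ∈ Finset.range (t + 1), C (-(V (n + t - r - 1) ⟨0, hn⟩)) * X ^ r)
        + (-(p (n + t))) := by
    intro t
    induction t with
    | zero =>
        have hs : (∑ r ∈ Finset.range (0 + 1),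
            C (-(V (n + 0 - r - 1) ⟨0, hn⟩)) * X ^ r) = C (-(V (n - 1) ⟨0, hn⟩)) := by
          simp
        rw [hs, key1, Nat.add_zero, key2, neg_neg, map_one]
        ring
    | succ t ih =>
        have e : n + (t + 1) = n + t + 1 := rfl
        rw [e]
        have hsum : (∑ r ∈ Finset.range (t + 1 + 1),
            C (-(V (n + t + 1 - r - 1) ⟨0, hn⟩)) * X ^ r)
            = X * (∑ r ∈ Finset.range (t + 1), C (-(V (n + t - r - 1) ⟨0, hn⟩)) * X ^ r)
              - C (V (n + t) ⟨0, hn⟩) := by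
          rw [Finset.sum_range_succ', Finset.mul_sum]
          have h1 : ∀ r, n + t + 1 - (r + 1) - 1 = n + t - r - 1 := by omega
          have h2 : n + t + 1 - 0 - 1 = n + t := by omega
          simp only [h1, h2, pow_zero, mul_one]
          rw [sub_eq_add_neg]
          congr 1
          · exact Finset.sum_congr rfl (fun r _ => by rw [pow_succ]; ring)
          · rw [map_neg]
        rw [hsum, pow_succ', ih, key3 (n + t)]
        ring
  refine (div_modByMonic_unique _ (-(p (n + s))) hu ⟨?_, ?_⟩).1
  · rw [main s]; ring
  · rw [degree_neg, hdegreeu]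
    exact hpdeg _
end

section
/- Let u(λ) = Π_{k=1}^n (λ − λ_k) with all λ_k nonzero and pairwise distinct, and let V_1^{(−r)} denote the first component of the negative basic separable potentials. Then for any s ∈ ℕ, the Laurent-polynomial part of λ^{−s}/u(λ) is [λ^{−s}/u(λ)]_+ = Σ_{r=1}^{s} V_1^{(−s+r−1)} λ^{−r}. -/
/-!
The potentials `V^{(m)}` are the coefficients of the polynomial
`W_m(λ) = ∑ⱼ V_j^{(m)} λ^{n-j}`, the interpolant of degree `< n` of `-λ^m` at the roots
of `u`.
Uniqueness of interpolation gives `W_0 = -1` and `λ W_{m-1} = W_m + V_1^{(m-1)} u`.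
Multiplying the latter by `λ^{-r}` and summing over `r = 1, …, s` telescopes to
`λ^{-s} = (∑_{r=1}^{s} V_1^{(-s+r-1)} λ^{-r}) u - W_{-s}`, so `R = -W_{-s}`.
-/

open Polynomial Finset Lagrange

namespace SeparablePotential

variable {K : Type*} [Field K]

/-- With `0`-indexed `j`, the polynomial `∑ⱼ vⱼ λ^{n-j}` of the paper. -/
noncomputable def potentialPoly {n : ℕ} (v : Fin n → K) : K[X] :=
  ∑ j : Fin n, C (v j) * X ^ (n - 1 - (j : ℕ))

theorem degree_potentialPoly_lt {n : ℕ} (v : Fin n → K) : (potentialPoly v).degree < n := by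
  rw [← mem_degreeLT]
  refine Submodule.sum_mem _ fun j _ => mem_degreeLT.2 <|
    (degree_C_mul_X_pow_le _ _).trans_lt ?_
  have := j.is_lt
  exact_mod_cast (by omega : n - 1 - (j : ℕ) < n)

theorem eval_potentialPoly {n : ℕ} (v : Fin n → K) (x : K) :
    (potentialPoly v).eval x = ∑ j : Fin n, v j * x ^ ((n : ℤ) - 1 - (j : ℕ)) := by
  simp only [potentialPoly, eval_finsetSum, eval_mul, eval_C, eval_pow, eval_X]
  refine sum_congr rfl fun j _ => ?_
  have := j.is_lt
  rw [show (n : ℤ) - 1 - (j : ℕ) = ((n - 1 - (j : ℕ) : ℕ) : ℤ) by omega, zpow_natCast]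

theorem potentialPoly_succ {n : ℕ} (v : Fin (n + 1) → K) :
    potentialPoly v = C (v 0) * X ^ n + potentialPoly (Fin.tail v) := by
  simp only [potentialPoly, Fin.sum_univ_succ, Fin.tail]
  congr 1
  refine sum_congr rfl fun j _ => ?_
  rw [Fin.val_succ]
  congr 2
  omega

theorem potentialPoly_eq_of_eval_eq {n : ℕ} {l : Fin n → K} (hl : Function.Injective l)
    {v : Fin n → K} {p : K[X]} (hp : p.degree < n)
    (h : ∀ i, (potentialPoly v).eval (l i) = p.eval (l i)) : potentialPoly v = p :=
  eq_of_degrees_lt_of_eval_index_eq univ hl.injOn (by simpa using degree_potentialPoly_lt v)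
    (by simpa using hp) fun i _ => h i

theorem degree_X_mul_potentialPoly_sub_lt {n : ℕ} (v : Fin (n + 1) → K) {u : K[X]}
    (hu : u.IsMonicOfDegree (n + 1)) :
    (X * potentialPoly v - C (v 0) * u).degree < ↑(n + 1) := by
  rw [potentialPoly_succ, ← mem_degreeLT,
    show X * (C (v 0) * X ^ n + potentialPoly (Fin.tail v)) - C (v 0) * u
      = X * potentialPoly (Fin.tail v) - v 0 • (u - X ^ (n + 1)) by rw [smul_eq_C_mul]; ring]
  refine Submodule.sub_mem _ (mem_degreeLT.2 ?_) (Submodule.smul_mem _ _ (mem_degreeLT.2 ?_))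
  · rw [X_mul, degree_mul_X, Nat.cast_add, Nat.cast_one]
    exact WithBot.add_lt_add_right (by simp) (degree_potentialPoly_lt _)
  · exact (degree_le_natDegree).trans_lt (by exact_mod_cast hu.natDegree_sub_X_pow n.succ_ne_zero)

theorem X_mul_potentialPoly_eq {n : ℕ} {l : Fin (n + 1) → K} (hl : Function.Injective l)
    {v w : Fin (n + 1) → K}
    (h : ∀ i, l i * (potentialPoly v).eval (l i) = (potentialPoly w).eval (l i)) :
    X * potentialPoly v = potentialPoly w + C (v 0) * nodal univ l := by
  have hu : (nodal univ l).IsMonicOfDegree (n + 1) := ⟨by simp [natDegree_nodal], nodal_monic⟩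
  rw [potentialPoly_eq_of_eval_eq (v := w) hl (degree_X_mul_potentialPoly_sub_lt v hu) fun i => by
    simp [eval_nodal_at_node, ← h]]
  ring

theorem zpow_neg_natCast_eq_sum_mul_sub {a w : ℤ → K} {x y : K} (hx : x ≠ 0) (hw : w 0 = -1)
    (hrec : ∀ m, x * w (m - 1) = w m + a (m - 1) * y) (s : ℕ) :
    x ^ (-(s : ℤ)) = (∑ r ∈ Icc 1 s, a (-(s : ℤ) + r - 1) * x ^ (-(r : ℤ))) * y - w (-s) := by
  set F : ℕ → K := fun r => -(x ^ (1 - (r : ℤ)) * w (-(s : ℤ) + r - 1))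
  have hstep : ∀ r : ℕ, a (-(s : ℤ) + r - 1) * x ^ (-(r : ℤ)) * y = F (r + 1) - F r := by
    intro r
    simp only [F]
    push_cast
    rw [show (1 : ℤ) - (r + 1) = -r by ring, show -(s : ℤ) + (r + 1) - 1 = -s + r by ring,
      show (1 : ℤ) - r = 1 + -r by ring, zpow_add₀ hx, zpow_one]
    linear_combination -x ^ (-(r : ℤ)) * hrec (-s + r)
  rw [sum_mul, sum_congr rfl fun r _ => hstep r, ← Ico_add_one_right_eq_Icc,
    sum_Ico_sub _ (by omega)]
  simp [F, hw]

end SeparablePotential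

open SeparablePotential in
/-- with `u(λ) = ∏ (λ - λ_k)` (all `λ_k` nonzero and pairwise
distinct) and `V_1^{(-r)}` the first component of the negative basic separable
potentials (defined by `λ_i^m + ∑_j V_j^{(m)} λ_i^{n-j} = 0` for `m ∈ ℤ`), the
Laurent-polynomial part of `λ^{-s}/u(λ)` is
`[λ^{-s}/u(λ)]_+ = ∑_{r=1}^{s} V_1^{(-s+r-1)} λ^{-r}`, i.e. the remainder
`λ^{-s}/u(λ) - ∑_{r=1}^{s} V_1^{(-s+r-1)} λ^{-r}` has the form `R(λ)/u(λ)`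
with `R` a polynomial of degree `< n`. -/
theorem laurent_part_negative_powers
    (n s : ℕ) (hn : 0 < n) (l : Fin n → ℝ)
    (hdist : Function.Injective l) (hne : ∀ i, l i ≠ 0)
    (V : ℤ → Fin n → ℝ)
    (hV : ∀ (m : ℤ) (i : Fin n),
      (l i) ^ m + ∑ j : Fin n, V m j * (l i) ^ ((n : ℤ) - 1 - (j : ℕ)) = 0) :
    ∃ R : ℝ[X], R.degree < n ∧
      ∀ x : ℝ, x ≠ 0 → (∏ k : Fin n, (x - l k)) ≠ 0 →
        x ^ (-(s : ℤ)) / ∏ k : Fin n, (x - l k)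
          = (∑ r ∈ Finset.Icc 1 s, V (-(s : ℤ) + r - 1) ⟨0, hn⟩ * x ^ (-(r : ℤ)))
            + R.eval x / ∏ k : Fin n, (x - l k) := by
  obtain ⟨n, rfl⟩ := Nat.exists_eq_add_one_of_ne_zero hn.ne'
  rw [show (⟨0, hn⟩ : Fin (n + 1)) = 0 from rfl]
  have hval : ∀ m i, (potentialPoly (V m)).eval (l i) = -l i ^ m := fun m i => by
    rw [eval_potentialPoly]; linear_combination hV m i
  have hW0 : potentialPoly (V 0) = -1 :=
    potentialPoly_eq_of_eval_eq hdist (by rw [degree_neg, degree_one]; exact_mod_cast n.succ_pos)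
      fun i => by simp [hval]
  have hrec : ∀ m, X * potentialPoly (V (m - 1))
      = potentialPoly (V m) + C (V (m - 1) 0) * nodal univ l :=
    fun m => X_mul_potentialPoly_eq hdist fun i => by
      rw [hval, hval, zpow_sub_one₀ (hne i)]; field_simp [hne i]
  refine ⟨-potentialPoly (V (-s)), by rw [degree_neg]; exact degree_potentialPoly_lt _,
    fun x hx hu => ?_⟩
  have key := zpow_neg_natCast_eq_sum_mul_sub (a := fun m => V m 0)
    (w := fun m => (potentialPoly (V m)).eval x) (y := (nodal univ l).eval x) hx (by simp [hW0])
    (fun m => by simpa using congrArg (eval x) (hrec m)) s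
  rw [eval_nodal] at key
  rw [eval_neg, key]
  field_simp
  ring
end

section
/- Let L(λ) be the 2×2 traceless matrix with entries L_{11} = v(λ), L_{12} = u(λ), L_{21} = w(λ), L_{22} = −v(λ), where u(λ) = Π_k (λ−λ_k), v is the interpolation polynomial with v(λ_i) = g(λ_i)μ_i, and w(λ) = −2(g²(λ)/f(λ))[F(λ, v(λ)/g(λ))/u(λ)]_+ with F(x,y) = ½ f(x) y² − σ(x). Then det[L(λ) − g(λ)μ I] = −2(g²(λ)/f(λ)) ( σ(λ) + Σ_{j=1}^n H_j λ^{n−j} − ½ f(λ) μ² ), where H_j are the Stäckel Hamiltonians defined by the n equations σ(λ_i) + Σ_j H_j λ_i^{n−j} = ½ f(λ_i) μ_i² for i = 1,…,n. -/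
/-!
At each node `λ_i` the polynomial `u` vanishes and `v/g = μ_i`, so the division identity
`F(λ, v/g) = [F/u]_+ · u + Rm` says `Rm(λ_i) = ½ f(λ_i) μ_i² - σ(λ_i) = Σ_j H_j λ_i^{n-j}`.
Both `Rm` and `Σ_j H_j λ^{n-j}` have degree `< n` and agree at `n` distinct nodes, hence coincide.
Substituting `u · w = -2 (g²/f) (½ f (v/g)² - σ - Rm)` into `det = g²μ² - v² - u w` gives the curve.
-/

open Polynomial Finset

theorem sum_mul_prod_lagrange_eval_node {K ι : Type*} [Field K] [Fintype ι] [DecidableEq ι]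
    {x : ι → K} (hx : Function.Injective x) (c : ι → K) (i : ι) :
    ∑ j, c j * ∏ k ∈ univ.erase j, (x i - x k) / (x j - x k) = c i := by
  rw [sum_eq_single i]
  · rw [prod_eq_one, mul_one]
    intro k hk
    exact div_self (sub_ne_zero.mpr (hx.ne (ne_of_mem_erase hk).symm))
  · intro j _ hji
    rw [prod_eq_zero (mem_erase.mpr ⟨fun h => hji h.symm, mem_univ i⟩) (by rw [sub_self, zero_div]),
      mul_zero]
  · exact fun h => (h (mem_univ i)).elim

theorem degree_sum_C_mul_X_pow_rev_lt {R : Type*} [Semiring R] {n : ℕ} (a : Fin n → R) :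
    (∑ j : Fin n, C (a j) * X ^ (n - 1 - (j : ℕ))).degree < (n : WithBot ℕ) := by
  rw [← Equiv.sum_comp Fin.revPerm]
  convert degree_sum_fin_lt (a ∘ Fin.rev) using 5 with j
  · rfl
  · rw [Fin.revPerm_apply, Fin.val_rev]
    omega

theorem remainder_eq_sum_hamiltonians {K : Type*} [Field K] {n : ℕ} {l μ H : Fin n → K}
    {σ f g u v Wp : K → K} {Rm : K[X]} (hdist : Function.Injective l) (hlne : ∀ i, l i ≠ 0)
    (hg : ∀ i, g (l i) ≠ 0)
    (hH : ∀ i, σ (l i) + ∑ j : Fin n, H j * l i ^ (n - 1 - (j : ℕ)) = 1 / 2 * f (l i) * μ i ^ 2)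
    (hu : ∀ i, u (l i) = 0) (hv : ∀ i, v (l i) = g (l i) * μ i) (hRm : Rm.degree < n)
    (hdiv : ∀ x, x ≠ 0 → 1 / 2 * f x * (v x / g x) ^ 2 - σ x = Wp x * u x + Rm.eval x) :
    Rm = ∑ j : Fin n, C (H j) * X ^ (n - 1 - (j : ℕ)) := by
  rw [← Fintype.card_fin n, ← card_univ] at hRm
  refine eq_of_degrees_lt_of_eval_index_eq univ hdist.injOn hRm
    (by simpa only [card_univ, Fintype.card_fin] using degree_sum_C_mul_X_pow_rev_lt H)
    fun i _ => ?_
  have hdiv_i := hdiv (l i) (hlne i)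
  rw [hu i, hv i, mul_div_cancel_left₀ _ (hg i), mul_zero, zero_add] at hdiv_i
  simp only [eval_finsetSum, eval_mul, eval_C, eval_pow, eval_X]
  linear_combination -hdiv_i - hH i

theorem det_lax_sub_mul_eq_of_division {v u w Wp g f σ R mu : ℝ} (hf : f ≠ 0) (hg : g ≠ 0)
    (hw : w = -2 * g ^ 2 / f * Wp) (hdiv : 1 / 2 * f * (v / g) ^ 2 - σ = Wp * u + R) :
    Matrix.det !![v - g * mu, u; w, -v - g * mu] = -2 * g ^ 2 / f * (σ + R - 1 / 2 * f * mu ^ 2) := by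
  rw [Matrix.det_fin_two_of, hw]
  field_simp at hdiv ⊢
  linear_combination -hdiv

theorem lax_matrix_reconstructs_separation_curve_general
    (n : ℕ)
    (l μ : Fin n → ℝ) (hdist : Function.Injective l) (hlne : ∀ i, l i ≠ 0)
    (σ f g : ℝ → ℝ) (hf : ∀ x, f x ≠ 0) (hg : ∀ x, g x ≠ 0)
    (H : Fin n → ℝ)
    (hH : ∀ i : Fin n, σ (l i) + ∑ j : Fin n, H j * (l i) ^ (n - 1 - (j : ℕ))
      = (1 / 2) * f (l i) * (μ i) ^ 2)
    (u v w Wp : ℝ → ℝ)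
    (hu : ∀ x, u x = ∏ k : Fin n, (x - l k))
    (hv : ∀ x, v x = ∑ i : Fin n, g (l i) * μ i *
      ∏ k ∈ Finset.univ.erase i, ((x - l k) / (l i - l k)))
    -- [F(λ, v/g)/u]₊ = Wp, with remainder Rm of degree < n:
    (Rm : Polynomial ℝ) (hRm : Rm.degree < n)
    (hdiv : ∀ x : ℝ, x ≠ 0 →
      (1 / 2) * f x * (v x / g x) ^ 2 - σ x = Wp x * u x + Rm.eval x)
    (hw : ∀ x, w x = -2 * (g x) ^ 2 / f x * Wp x) :
    ∀ (x mu : ℝ), x ≠ 0 →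
      Matrix.det !![v x - g x * mu, u x; w x, -(v x) - g x * mu]
        = -2 * (g x) ^ 2 / f x *
            (σ x + ∑ j : Fin n, H j * x ^ (n - 1 - (j : ℕ))
              - (1 / 2) * f x * mu ^ 2) := by
  have hRm_eq : Rm = ∑ j : Fin n, C (H j) * X ^ (n - 1 - (j : ℕ)) :=
    remainder_eq_sum_hamiltonians hdist hlne (fun i => hg (l i)) hH
      (fun i => by rw [hu]; exact prod_eq_zero (mem_univ i) (sub_self _))
      (fun i => by rw [hv]; exact sum_mul_prod_lagrange_eval_node hdist _ i) hRm hdiv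
  intro x mu hx
  have hdiv_x := hdiv x hx
  simp only [hRm_eq, eval_finsetSum, eval_mul, eval_C, eval_pow, eval_X] at hdiv_x
  exact det_lax_sub_mul_eq_of_division (hf x) (hg x) (hw x) hdiv_x

/-- the Lax matrix `L(λ) = [[v, u], [w, -v]]`, with
`u(λ) = ∏(λ-λ_k)`, `v` the interpolation polynomial with `v(λ_i) = g(λ_i)μ_i`,
and `w(λ) = -2 (g²(λ)/f(λ)) [F(λ, v(λ)/g(λ))/u(λ)]_+` where
`F(x,y) = ½ f(x) y² - σ(x)` (the Laurent-polynomial part `Wp` being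
characterized by `F(x, v/g) = Wp(x) u(x) + Rm(x)` with `Rm` a polynomial of
degree `< n` and `Wp` a Laurent polynomial `q(x)/x^N`), reconstructs the
separation curve:
`det[L(λ) - g(λ)μ I] = -2 (g²(λ)/f(λ)) (σ(λ) + ∑_j H_j λ^{n-j} - ½ f(λ)μ²)`,
where the `H_j` are the Stäckel Hamiltonians solving
`σ(λ_i) + ∑_j H_j λ_i^{n-j} = ½ f(λ_i) μ_i²`. -/
theorem lax_matrix_reconstructs_separation_curve
    (n : ℕ) (hn : 0 < n)
    (l μ : Fin n → ℝ) (hdist : Function.Injective l) (hlne : ∀ i, l i ≠ 0)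
    (σ f g : ℝ → ℝ) (hf : ∀ x, f x ≠ 0) (hg : ∀ x, g x ≠ 0)
    (H : Fin n → ℝ)
    (hH : ∀ i : Fin n, σ (l i) + ∑ j : Fin n, H j * (l i) ^ (n - 1 - (j : ℕ))
      = (1 / 2) * f (l i) * (μ i) ^ 2)
    (u v w Wp : ℝ → ℝ)
    (hu : ∀ x, u x = ∏ k : Fin n, (x - l k))
    (hv : ∀ x, v x = ∑ i : Fin n, g (l i) * μ i *
      ∏ k ∈ Finset.univ.erase i, ((x - l k) / (l i - l k)))
    -- [F(λ, v/g)/u]₊ = Wp, with remainder Rm of degree < n: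
    (Rm : Polynomial ℝ) (hRm : Rm.degree < n)
    (hdiv : ∀ x : ℝ, x ≠ 0 →
      (1 / 2) * f x * (v x / g x) ^ 2 - σ x = Wp x * u x + Rm.eval x)
    -- Wp is a Laurent polynomial:
    (q : Polynomial ℝ) (N : ℕ) (hWp : ∀ x : ℝ, x ≠ 0 → Wp x = q.eval x / x ^ N)
    (hw : ∀ x, w x = -2 * (g x) ^ 2 / f x * Wp x) :
    ∀ (x mu : ℝ), x ≠ 0 →
      Matrix.det !![v x - g x * mu, u x; w x, -(v x) - g x * mu]
        = -2 * (g x) ^ 2 / f x *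
            (σ x + ∑ j : Fin n, H j * x ^ (n - 1 - (j : ℕ))
              - (1 / 2) * f x * mu ^ 2) :=
  lax_matrix_reconstructs_separation_curve_general n l μ hdist hlne σ f g hf hg H hH u v w Wp hu hv
    Rm hRm hdiv hw
end

section
/- For the Hénon–Heiles system, the two Hamiltonians H₁ = ½y₁² + ½y₂² + x₁³ + ½x₁x₂² and H₂ = ½x₂y₁y₂ − ½x₁y₂² + (1/16)x₂⁴ + ¼x₁²x₂² Poisson-commute with respect to the canonical Poisson bracket on ℝ⁴ with coordinates (x₁,x₂,y₁,y₂). -/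
/-!
Both Hamiltonians are polynomials, so their differentials at `ξ` are the covectors
`v ↦ a ⬝ᵥ v.1 + b ⬝ᵥ v.2` given by their gradients `(a, b)` in position and momentum, and the
bracket becomes `a ⬝ᵥ d - b ⬝ᵥ c`. For the Hénon–Heiles gradients this is a polynomial in `ξ`
whose terms cancel identically.
-/

/-- The canonical Poisson bracket on `ℝ⁴` with coordinates
`(x₁,x₂,y₁,y₂)`: `{F,G} = ∑ i (∂F/∂x_i ∂G/∂y_i − ∂F/∂y_i ∂G/∂x_i)`. -/
noncomputable def poissonBracket2 (F G : (Fin 2 → ℝ) × (Fin 2 → ℝ) → ℝ)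
    (ξ : (Fin 2 → ℝ) × (Fin 2 → ℝ)) : ℝ :=
  ∑ i : Fin 2,
    (fderiv ℝ F ξ (Pi.single i 1, 0) * fderiv ℝ G ξ (0, Pi.single i 1)
      - fderiv ℝ F ξ (0, Pi.single i 1) * fderiv ℝ G ξ (Pi.single i 1, 0))

open Matrix

namespace PhaseSpace

variable {n : ℕ}

noncomputable def dotProductCLM (a : Fin n → ℝ) : (Fin n → ℝ) →L[ℝ] ℝ :=
  ∑ i, a i • ContinuousLinearMap.proj i

@[simp] lemma dotProductCLM_apply (a v : Fin n → ℝ) : dotProductCLM a v = a ⬝ᵥ v := by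
  simp [dotProductCLM, dotProduct]

noncomputable def covector (a b : Fin n → ℝ) : (Fin n → ℝ) × (Fin n → ℝ) →L[ℝ] ℝ :=
  (dotProductCLM a).coprod (dotProductCLM b)

@[simp] lemma covector_apply (a b : Fin n → ℝ) (v : (Fin n → ℝ) × (Fin n → ℝ)) :
    covector a b v = a ⬝ᵥ v.1 + b ⬝ᵥ v.2 := by
  simp [covector]

lemma hasFDerivAt_position (i : Fin n) (ξ : (Fin n → ℝ) × (Fin n → ℝ)) :
    HasFDerivAt (fun p : (Fin n → ℝ) × (Fin n → ℝ) => p.1 i) (covector (Pi.single i 1) 0) ξ := by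
  have h : (fun p : (Fin n → ℝ) × (Fin n → ℝ) => p.1 i) = covector (Pi.single i 1) 0 := by
    ext p; simp
  exact h ▸ (covector _ _).hasFDerivAt

lemma hasFDerivAt_momentum (i : Fin n) (ξ : (Fin n → ℝ) × (Fin n → ℝ)) :
    HasFDerivAt (fun p : (Fin n → ℝ) × (Fin n → ℝ) => p.2 i) (covector 0 (Pi.single i 1)) ξ := by
  have h : (fun p : (Fin n → ℝ) × (Fin n → ℝ) => p.2 i) = covector 0 (Pi.single i 1) := by
    ext p; simp
  exact h ▸ (covector _ _).hasFDerivAt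

end PhaseSpace

open PhaseSpace

lemma poissonBracket2_eq_of_hasFDerivAt {F G : (Fin 2 → ℝ) × (Fin 2 → ℝ) → ℝ}
    {ξ : (Fin 2 → ℝ) × (Fin 2 → ℝ)} {a b c d : Fin 2 → ℝ}
    (hF : HasFDerivAt F (covector a b) ξ) (hG : HasFDerivAt G (covector c d) ξ) :
    poissonBracket2 F G ξ = a ⬝ᵥ d - b ⬝ᵥ c := by
  simp [poissonBracket2, hF.fderiv, hG.fderiv, dotProduct]

noncomputable def henonHeilesH₁ (p : (Fin 2 → ℝ) × (Fin 2 → ℝ)) : ℝ :=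
  (1/2) * (p.2 0)^2 + (1/2) * (p.2 1)^2 + (p.1 0)^3 + (1/2) * (p.1 0) * (p.1 1)^2

noncomputable def henonHeilesH₂ (p : (Fin 2 → ℝ) × (Fin 2 → ℝ)) : ℝ :=
  (1/2) * (p.1 1) * (p.2 0) * (p.2 1) - (1/2) * (p.1 0) * (p.2 1)^2
    + (1/16) * (p.1 1)^4 + (1/4) * (p.1 0)^2 * (p.1 1)^2

lemma hasFDerivAt_henonHeilesH₁ (ξ : (Fin 2 → ℝ) × (Fin 2 → ℝ)) :
    HasFDerivAt henonHeilesH₁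
      (covector ![3 * ξ.1 0 ^ 2 + (1/2) * ξ.1 1 ^ 2, ξ.1 0 * ξ.1 1] ![ξ.2 0, ξ.2 1]) ξ := by
  have hx (i : Fin 2) := hasFDerivAt_position i ξ
  have hy (i : Fin 2) := hasFDerivAt_momentum i ξ
  refine HasFDerivAt.congr_fderiv ((((hy 0).pow 2).const_mul (1/2)).add
    (((hy 1).pow 2).const_mul (1/2)) |>.add ((hx 0).pow 3)
    |>.add (((hx 0).const_mul (1/2)).mul ((hx 1).pow 2))) ?_
  refine ContinuousLinearMap.ext fun v => ?_
  simp only [_root_.add_apply, _root_.smul_apply, covector_apply,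
    single_dotProduct, zero_dotProduct, vec2_dotProduct, cons_val_zero, cons_val_one, smul_eq_mul,
    nsmul_eq_mul]
  ring

lemma hasFDerivAt_henonHeilesH₂ (ξ : (Fin 2 → ℝ) × (Fin 2 → ℝ)) :
    HasFDerivAt henonHeilesH₂
      (covector ![-(1/2) * ξ.2 1 ^ 2 + (1/2) * ξ.1 0 * ξ.1 1 ^ 2,
          (1/2) * ξ.2 0 * ξ.2 1 + (1/4) * ξ.1 1 ^ 3 + (1/2) * ξ.1 0 ^ 2 * ξ.1 1]
        ![(1/2) * ξ.1 1 * ξ.2 1, (1/2) * ξ.1 1 * ξ.2 0 - ξ.1 0 * ξ.2 1]) ξ := by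
  have hx (i : Fin 2) := hasFDerivAt_position i ξ
  have hy (i : Fin 2) := hasFDerivAt_momentum i ξ
  refine HasFDerivAt.congr_fderiv (((((hx 1).const_mul (1/2)).mul (hy 0)).mul (hy 1)).sub
    (((hx 0).const_mul (1/2)).mul ((hy 1).pow 2)) |>.add (((hx 1).pow 4).const_mul (1/16))
    |>.add ((((hx 0).pow 2).const_mul (1/4)).mul ((hx 1).pow 2))) ?_
  refine ContinuousLinearMap.ext fun v => ?_
  simp only [_root_.add_apply, _root_.sub_apply,
    _root_.smul_apply, covector_apply, single_dotProduct, zero_dotProduct,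
    vec2_dotProduct, cons_val_zero, cons_val_one, smul_eq_mul, nsmul_eq_mul, Pi.mul_apply]
  ring

/-- the Hénon–Heiles Hamiltonians
`H₁ = ½y₁² + ½y₂² + x₁³ + ½x₁x₂²` and
`H₂ = ½x₂y₁y₂ − ½x₁y₂² + (1/16)x₂⁴ + ¼x₁²x₂²`
Poisson-commute with respect to the canonical Poisson bracket on ℝ⁴. -/
theorem henon_heiles_hamiltonians_commute :
    ∀ ξ : (Fin 2 → ℝ) × (Fin 2 → ℝ),
      poissonBracket2
        (fun p => (1/2) * (p.2 0)^2 + (1/2) * (p.2 1)^2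
          + (p.1 0)^3 + (1/2) * (p.1 0) * (p.1 1)^2)
        (fun p => (1/2) * (p.1 1) * (p.2 0) * (p.2 1)
          - (1/2) * (p.1 0) * (p.2 1)^2
          + (1/16) * (p.1 1)^4 + (1/4) * (p.1 0)^2 * (p.1 1)^2) ξ = 0 := by
  intro ξ
  change poissonBracket2 henonHeilesH₁ henonHeilesH₂ ξ = 0
  rw [poissonBracket2_eq_of_hasFDerivAt (hasFDerivAt_henonHeilesH₁ ξ)
    (hasFDerivAt_henonHeilesH₂ ξ)]
  simp only [vec2_dotProduct, cons_val_zero, cons_val_one]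
  ring
end

section
/- For the Stäckel transform of Theorem 2 with γ₁ > ⋯ > γ_k > n−1 and S = {s₁,…,s_k} ⊂ {1,…,n}: define h = H + A_γ α where (A_γ)_{ij} = V_i^{(γ_j)} and α = (α₁,…,α_k,0,…,0)^T. If A_γ is invertible, then solving h_{s_i} = α̃_i for the parameters α and substituting into the remaining h_j yields the explicit formula h̃ = −A_γ^{−1} H + A_γ^{−1} α̃ for the transformed Hamiltonian vector; in particular, setting α̃ = 0 gives H̃ = −A_γ^{−1} H. -/
open scoped Matrix

/-- explicit form of the Stäckel transform of Theorem 2.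
`s : Fin k → Fin n` enumerates `S = {s₁,…,s_k}` and `c` enumerates its
complement.  `A = A_γ` is invertible and its last `n-k` columns are
`V^{(n-i)} = -e_i` for `i ∉ S` (the identity-like columns).  The extended seed
Hamiltonians are `h = H + A_γ α` with `α = (α₁,…,α_k,0,…,0)ᵀ`, and
`h̃ := -A_γ⁻¹ H + A_γ⁻¹ α̃` (with `α̃` the vector carrying `α̃_i` in the slots
`s_i`, corresponding to the terms `α̃_i λ^{n-s_i}` of the transformed curve).
If `h_{s_i} = α̃_i` for `i = 1,…,k`, then `h̃` is the result of solving for the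
parameters and substituting: its first `k` entries are the solved parameters
`α_i`, and its remaining entries are the remaining Hamiltonians `h_{c_j}`.
In particular `α̃ = 0` gives `H̃ = -A_γ⁻¹ H`. -/
theorem stackel_transform_explicit_matrix_form
    (n k : ℕ) (hkn : k ≤ n)
    (s : Fin k → Fin n) (hs : StrictMono s)
    (c : Fin (n - k) → Fin n) (hc : StrictMono c)
    (hcompl : Set.range c = (Set.range s)ᶜ)
    (A : Matrix (Fin n) (Fin n) ℝ) (hA : IsUnit A.det)
    -- the identity-like columns of A_γ : (A_γ)_{i, k+j} = V_i^{(n - c_j)} = -δ_{i, c_j}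
    (hAcols : ∀ (j : Fin (n - k)) (i : Fin n),
      A i ⟨k + (j : ℕ), by omega⟩ = if i = c j then -1 else 0)
    (H : Fin n → ℝ) (α αt : Fin k → ℝ)
    -- h = H + A_γ α, with α padded by zeros
    (h : Fin n → ℝ)
    (hh : h = H + A *ᵥ (fun j : Fin n =>
      if hj : (j : ℕ) < k then α ⟨j, hj⟩ else 0))
    -- h̃ = -A_γ⁻¹ H + A_γ⁻¹ α̃
    (ht : Fin n → ℝ)
    (hht : ht = -(A⁻¹ *ᵥ H) + A⁻¹ *ᵥ (fun j : Fin n =>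
      if hj : ∃ i : Fin k, s i = j then αt hj.choose else 0))
    -- the level-set equations h_{s_i} = α̃_i
    (hlevel : ∀ i : Fin k, h (s i) = αt i) :
    (∀ i : Fin k, ht ⟨(i : ℕ), lt_of_lt_of_le i.isLt hkn⟩ = α i) ∧
    (∀ j : Fin (n - k), ht ⟨k + (j : ℕ), by omega⟩ = h (c j)) ∧
    (αt = 0 → ht = -(A⁻¹ *ᵥ H)) := by

  have hsinj := hs.injective
  have hcinj := hc.injective
  set pad : Fin n → ℝ := fun j : Fin n => if hj : (j : ℕ) < k then α ⟨j, hj⟩ else 0 with hpadd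
  set atv : Fin n → ℝ := fun j : Fin n =>
    if hj : ∃ i : Fin k, s i = j then αt hj.choose else 0 with hatvd
  set v : Fin n → ℝ := fun j : Fin n =>
    if hj : (j : ℕ) < k then α ⟨j, hj⟩ else h (c ⟨(j : ℕ) - k, by omega⟩) with hvd
  have hnk : k + (n - k) = n := by omega
  let e : Fin k ⊕ Fin (n - k) ≃ Fin n := finSumFinEquiv.trans (finCongr hnk)
  have he1 : ∀ a : Fin k, ((e (Sum.inl a) : Fin n) : ℕ) = (a : ℕ) := by
    intro a; simp [e]
  have he2 : ∀ b : Fin (n - k), ((e (Sum.inr b) : Fin n) : ℕ) = k + (b : ℕ) := by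
    intro b; simp [e]
  have hsplit : ∀ (w : Fin n → ℝ) (i : Fin n), (A *ᵥ w) i =
      (∑ a : Fin k, A i (e (Sum.inl a)) * w (e (Sum.inl a))) +
      ∑ b : Fin (n - k), A i (e (Sum.inr b)) * w (e (Sum.inr b)) := by
    intro w i
    rw [Matrix.mulVec, dotProduct, ← Equiv.sum_comp e (fun j => A i j * w j),
      Fintype.sum_sum_type]
  -- key: A *ᵥ v = atv - H
  have key : A *ᵥ v = atv - H := by
    funext i
    have hv1 : ∀ a : Fin k, v (e (Sum.inl a)) = α a := by
      intro a
      have h1 : ((e (Sum.inl a) : Fin n) : ℕ) < k := by rw [he1]; exact a.isLt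
      simp only [hvd, dif_pos h1]
      exact congrArg α (Fin.ext (he1 a))
    have hp1 : ∀ a : Fin k, pad (e (Sum.inl a)) = α a := by
      intro a
      have h1 : ((e (Sum.inl a) : Fin n) : ℕ) < k := by rw [he1]; exact a.isLt
      simp only [hpadd, dif_pos h1]
      exact congrArg α (Fin.ext (he1 a))
    have hv2 : ∀ b : Fin (n - k), v (e (Sum.inr b)) = h (c b) := by
      intro b
      have h2 : ¬ ((e (Sum.inr b) : Fin n) : ℕ) < k := by rw [he2]; omega
      simp only [hvd, dif_neg h2]
      exact congrArg h (congrArg c (Fin.ext (by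
        show ((e (Sum.inr b) : Fin n) : ℕ) - k = (b : ℕ)
        have := he2 b; omega)))
    have hp2 : ∀ b : Fin (n - k), pad (e (Sum.inr b)) = 0 := by
      intro b
      have h2 : ¬ ((e (Sum.inr b) : Fin n) : ℕ) < k := by rw [he2]; omega
      simp only [hpadd, dif_neg h2]
    have hAe : ∀ b : Fin (n - k), A i (e (Sum.inr b)) = if i = c b then -1 else 0 := by
      intro b
      have : e (Sum.inr b) = (⟨k + (b : ℕ), by omega⟩ : Fin n) := Fin.ext (he2 b)
      rw [this]; exact hAcols b i
    have hpadeq : (A *ᵥ pad) i = ∑ a : Fin k, A i (e (Sum.inl a)) * α a := by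
      rw [hsplit pad i]
      simp only [hp1, hp2, mul_zero, Finset.sum_const_zero, add_zero]
    have hApad : (A *ᵥ pad) i = h i - H i := by
      rw [hh]; simp
    have hsecond : (∑ b : Fin (n - k), A i (e (Sum.inr b)) * v (e (Sum.inr b))) =
        if hi : ∃ b : Fin (n - k), c b = i then -h i else 0 := by
      by_cases hi : ∃ b : Fin (n - k), c b = i
      · obtain ⟨m, hm⟩ := hi
        rw [dif_pos ⟨m, hm⟩]
        rw [Finset.sum_eq_single m]
        · rw [hAe, hv2, hm, if_pos rfl]; ring
        · intro b _ hb
          rw [hAe, hv2]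
          rw [if_neg (by rw [← hm]; exact fun hcb => hb (hcinj hcb.symm))]
          ring
        · intro hb; exact absurd (Finset.mem_univ m) hb
      · rw [dif_neg hi]
        apply Finset.sum_eq_zero
        intro b _
        rw [hAe, if_neg (fun hcb => hi ⟨b, hcb.symm⟩)]
        ring
    have hAv : (A *ᵥ v) i = (h i - H i) +
        (if hi : ∃ b : Fin (n - k), c b = i then -h i else 0) := by
      rw [hsplit v i, hsecond, ← hApad, hpadeq]
      simp only [hv1]
    by_cases hi : ∃ l : Fin k, s l = i
    · obtain ⟨l, hl⟩ := hi
      have hnc : ¬ ∃ b : Fin (n - k), c b = i := by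
        rintro ⟨b, hb⟩
        have : i ∈ (Set.range s)ᶜ := by rw [← hcompl]; exact ⟨b, hb⟩
        exact this ⟨l, hl⟩
      have hatvi : atv i = αt l := by
        simp only [hatvd]
        rw [dif_pos ⟨l, hl⟩]
        congr 1
        exact hsinj ((Exists.choose_spec (⟨l, hl⟩ : ∃ i' : Fin k, s i' = i)).trans hl.symm)
      rw [hAv, dif_neg hnc, Pi.sub_apply, hatvi]
      rw [← hl, hlevel l]
      ring
    · have hic : ∃ b : Fin (n - k), c b = i := by
        have : i ∈ Set.range c := by
          rw [hcompl]
          intro hmem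
          obtain ⟨l, hl⟩ := hmem
          exact hi ⟨l, hl⟩
        exact this
      have hatvi : atv i = 0 := by simp only [hatvd]; rw [dif_neg hi]
      rw [hAv, dif_pos hic, Pi.sub_apply, hatvi]
      ring
  -- ht = v
  have htv : ht = v := by
    rw [hht]
    have : -(A⁻¹ *ᵥ H) + A⁻¹ *ᵥ atv = A⁻¹ *ᵥ (atv - H) := by
      rw [Matrix.mulVec_sub]; abel
    rw [this, ← key, Matrix.mulVec_mulVec, Matrix.nonsing_inv_mul A hA, Matrix.one_mulVec]
  refine ⟨?_, ?_, ?_⟩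
  · intro i
    rw [htv]
    simp only [hvd]
    rw [dif_pos i.isLt]
  · intro j
    rw [htv]
    simp only [hvd]
    have h2 : ¬ (k + (j : ℕ) < k) := by omega
    rw [dif_neg h2]
    exact congrArg h (congrArg c (Fin.ext (by
      show ((⟨k + (j : ℕ), by omega⟩ : Fin n) : ℕ) - k = (j : ℕ)
      simp)))
  · intro h0
    rw [hht]
    have : atv = 0 := by
      funext j
      simp only [hatvd, h0]
      split <;> simp
    rw [this]
    simp
end
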